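/- arXiv:0912.0594 — 12 statements merged into one kernel-verified Lean document; each statement's English description precedes it below -/
import Mathlib

section
/- Let n ≥ 1 be an integer and let K : (0,∞) × [−1,1] → ℝ be a measurable function such that for every unit vector ω ∈ ℝⁿ the map ξ ↦ ‖ξ‖ · |K(‖ξ‖, ⟨ξ/‖ξ‖, ω⟩)| is integrable on ℝⁿ. Then there exists a constant k₁ ∈ ℝ, independent of ω, such that for every unit vector ω ∈ ℝⁿ the vector-valued integral K₁(ω) := ∫_{ℝⁿ} K(‖ξ‖, ⟨ξ/‖ξ‖, ω⟩) ξ dξ equals k₁ · ω. -/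
open MeasureTheory Real
open scoped RealInnerProductSpace Classical

/-- The kernel function `ξ ↦ K(‖ξ‖, ⟨ξ/‖ξ‖, ω⟩)`, extended by `0` at `ξ = 0`. -/
noncomputable def kernelFun {n : ℕ} (K : ℝ → ℝ → ℝ) (ω ξ : EuclideanSpace ℝ (Fin n)) : ℝ :=
  if ξ = 0 then 0 else K ‖ξ‖ ⟪‖ξ‖⁻¹ • ξ, ω⟫

/-! The first moment `ω ↦ ∫ K(‖ξ‖, ⟨ξ/‖ξ‖, ω⟩) ξ dξ` commutes with every linear isometry `A`,
since `A` preserves Lebesgue measure, norms and inner products. A vector fixed by all isometries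
fixing a unit vector `e` is a multiple of `e` (reflect its component orthogonal to `e`), and the
isometries act transitively on the unit sphere, so an equivariant map is `ω ↦ k₁ • ω` there. -/

section Equivariant

variable {E : Type*} [NormedAddCommGroup E] [InnerProductSpace ℝ E]

theorem eq_inner_smul_of_forall_reflection_eq {e w : E} (he : ‖e‖ = 1)
    (hw : ∀ v : E, ⟪e, v⟫ = 0 → Submodule.reflection (ℝ ∙ v)ᗮ w = w) :
    w = ⟪w, e⟫ • e := by
  set u := w - ⟪w, e⟫ • e
  have hu : ⟪e, u⟫ = 0 := by
    rw [inner_sub_right, real_inner_smul_right, real_inner_self_eq_norm_sq, he, real_inner_comm]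
    ring
  have hfix_e : Submodule.reflection (ℝ ∙ u)ᗮ e = e :=
    Submodule.reflection_mem_subspace_eq_self <|
      Submodule.mem_orthogonal_singleton_iff_inner_left.mpr hu
  have hneg : -u = u := by
    have hfix_w := hw u hu
    rwa [← sub_add_cancel w (⟪w, e⟫ • e), map_add, map_smul, hfix_e,
      Submodule.reflection_orthogonalComplement_singleton_eq_neg, add_left_inj] at hfix_w
  have := IsAddTorsionFree.of_isTorsionFree ℝ E
  exact sub_eq_zero.mp (neg_eq_self.mp hneg)

theorem exists_smul_of_map_linearIsometryEquiv {f : E → E}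
    (hf : ∀ (A : E ≃ₗᵢ[ℝ] E) (ω : E), f (A ω) = A (f ω)) :
    ∃ c : ℝ, ∀ ω : E, ‖ω‖ = 1 → f ω = c • ω := by
  by_cases hunit : ∃ e : E, ‖e‖ = 1
  swap
  · exact ⟨0, fun ω hω => absurd ⟨ω, hω⟩ hunit⟩
  obtain ⟨e, he⟩ := hunit
  obtain ⟨c, hfe⟩ : ∃ c : ℝ, f e = c • e := by
    refine ⟨_, eq_inner_smul_of_forall_reflection_eq he fun v hv => ?_⟩
    rw [← hf, Submodule.reflection_mem_subspace_eq_self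
      (Submodule.mem_orthogonal_singleton_iff_inner_left.mpr hv)]
  refine ⟨c, fun ω hω => ?_⟩
  have hAe : Submodule.reflection (ℝ ∙ (e - ω))ᗮ e = ω :=
    Submodule.reflection_sub (he.trans hω.symm)
  rw [← hAe, hf, hfe, map_smul]

end Equivariant

theorem kernelFun_linearIsometryEquiv {n : ℕ} (K : ℝ → ℝ → ℝ)
    (A : EuclideanSpace ℝ (Fin n) ≃ₗᵢ[ℝ] EuclideanSpace ℝ (Fin n))
    (ω ξ : EuclideanSpace ℝ (Fin n)) :
    kernelFun K (A ω) (A ξ) = kernelFun K ω ξ := by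
  simp only [kernelFun, map_eq_zero_iff A A.injective, LinearIsometryEquiv.norm_map,
    ← LinearIsometryEquiv.map_smul, LinearIsometryEquiv.inner_map_map]

theorem integral_kernelFun_smul_linearIsometryEquiv {n : ℕ} (K : ℝ → ℝ → ℝ)
    (A : EuclideanSpace ℝ (Fin n) ≃ₗᵢ[ℝ] EuclideanSpace ℝ (Fin n))
    (ω : EuclideanSpace ℝ (Fin n)) :
    ∫ ξ, kernelFun K (A ω) ξ • ξ = A (∫ ξ, kernelFun K ω ξ • ξ) :=
  calc ∫ ξ, kernelFun K (A ω) ξ • ξ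
      = ∫ η, kernelFun K (A ω) (A η) • A η :=
        (A.measurePreserving.integral_comp A.toHomeomorph.measurableEmbedding _).symm
    _ = ∫ η, A (kernelFun K ω η • η) := by
        simp only [kernelFun_linearIsometryEquiv, map_smul]
    _ = A (∫ η, kernelFun K ω η • η) := A.toLinearIsometry.integral_comp_comm _

theorem kernel_first_moment_parallel_general (n : ℕ) (K : ℝ → ℝ → ℝ) :
    ∃ k₁ : ℝ, ∀ ω : EuclideanSpace ℝ (Fin n), ‖ω‖ = 1 →
      (∫ ξ, kernelFun K ω ξ • ξ) = k₁ • ω :=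
  exists_smul_of_map_linearIsometryEquiv (integral_kernelFun_smul_linearIsometryEquiv K)

/-- The first moment `K₁(ω) = ∫_{ℝⁿ} K(‖ξ‖, ⟨ξ/‖ξ‖, ω⟩) ξ dξ` equals `k₁ • ω` for a
constant `k₁` independent of the unit vector `ω`. -/
theorem kernel_first_moment_parallel (n : ℕ) (hn : 1 ≤ n) (K : ℝ → ℝ → ℝ)
    (hK : Measurable (Function.uncurry K))
    (hint : ∀ ω : EuclideanSpace ℝ (Fin n), ‖ω‖ = 1 →
      Integrable (fun ξ => ‖ξ‖ * |kernelFun K ω ξ|)) :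
    ∃ k₁ : ℝ, ∀ ω : EuclideanSpace ℝ (Fin n), ‖ω‖ = 1 →
      (∫ ξ, kernelFun K ω ξ • ξ) = k₁ • ω :=
  kernel_first_moment_parallel_general n K
end

section
/- Let n ≥ 2 be an integer and κ ∈ ℝ. Define the linear operators L and D on real polynomials by L(P) = −(1−X²)P'' + (n+1)X P' + (n−1)P and D(P) = −(1−X²)P' + X P. For any real polynomial P, set g(θ) = P(cos θ) sin θ. Then for every θ ∈ (0,π): −(sin θ)^{2−n} e^{−κ cos θ} · d/dθ( (sin θ)^{n−2} e^{κ cos θ} g'(θ) ) + (n−2)/sin²θ · g(θ) = ( L(P)(cos θ) + κ · D(P)(cos θ) ) · sin θ. -/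
open Polynomial Real

/-- The operator `L(P) = −(1−X²)P'' + (n+1)X P' + (n−1)P` on real polynomials. -/
noncomputable def Lop (n : ℕ) (P : Polynomial ℝ) : Polynomial ℝ :=
  -((1 - X ^ 2) * derivative (derivative P)) + C ((n : ℝ) + 1) * X * derivative P
    + C ((n : ℝ) - 1) * P

/-- The operator `D(P) = −(1−X²)P' + X P` on real polynomials. -/
noncomputable def Dop (P : Polynomial ℝ) : Polynomial ℝ :=
  -((1 - X ^ 2) * derivative P) + X * P

/-!
Since `sin² = 1 − cos²`, the derivative of `g = P(cos) · sin` is `D(P)(cos)`, so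
`g'' = −D(P)'(cos) · sin`. The weight `w = sinⁿ⁻² · e^{κ cos}` has logarithmic derivative
`(n − 2) cos / sin − κ sin`, hence `−w⁻¹ (w g')' = −((n − 2) cos / sin − κ sin) D(P)(cos) − g''`.
The `κ`-terms give `κ D(P)(cos) sin`, and the rest is `L(P)(cos) sin` by the polynomial identities
`L(P) = D(P)' + (n − 2)(X P)'` and `X D(P) − P = −(1 − X²)(X P)'`.
-/

theorem Lop_eq_derivative_Dop_add_C_mul (n : ℕ) (P : ℝ[X]) :
    Lop n P = derivative (Dop P) + C ((n : ℝ) - 2) * derivative (X * P) := by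
  simp only [Lop, Dop, derivative_add, derivative_neg, derivative_mul, derivative_sub,
    derivative_one, derivative_X_pow, derivative_X]
  simp only [map_sub, map_add, C_1, map_natCast, map_ofNat]
  ring

theorem X_mul_Dop_sub_self (P : ℝ[X]) : X * Dop P - P = -((1 - X ^ 2) * derivative (X * P)) := by
  simp only [Dop, derivative_mul, derivative_X]
  ring

theorem hasDerivAt_eval_cos (Q : ℝ[X]) (t : ℝ) :
    HasDerivAt (fun s => Q.eval (cos s)) (-(derivative Q).eval (cos t) * sin t) t :=
  ((Q.hasDerivAt (cos t)).comp t (hasDerivAt_cos t)).congr_deriv (by ring)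

theorem hasDerivAt_eval_cos_mul_sin (P : ℝ[X]) (t : ℝ) :
    HasDerivAt (fun s => P.eval (cos s) * sin s) ((Dop P).eval (cos t)) t := by
  refine ((hasDerivAt_eval_cos P t).fun_mul (hasDerivAt_sin t)).congr_deriv ?_
  simp only [Dop, eval_add, eval_neg, eval_mul, eval_sub, eval_one, eval_pow, eval_X]
  linear_combination -(derivative P).eval (cos t) * sin_sq_add_cos_sq t

theorem hasDerivAt_sin_pow_mul_exp_cos (m : ℕ) (κ : ℝ) {t : ℝ} (ht : sin t ≠ 0) :
    HasDerivAt (fun s => sin s ^ m * exp (κ * cos s))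
      (sin t ^ m * exp (κ * cos t) * (m * cos t / sin t - κ * sin t)) t := by
  refine (((hasDerivAt_sin t).fun_pow m).fun_mul
    ((hasDerivAt_cos t).const_mul κ).exp).congr_deriv ?_
  rcases m with _ | m
  · simp
  · rw [Nat.add_sub_cancel, pow_succ]
    field_simp
    ring

/-- For `g(θ) = P(cos θ) sin θ`, the conjugated Laplace-type operator
`−(sin θ)^{2−n} e^{−κ cos θ} (sin^{n−2}θ e^{κ cos θ} g')' + (n−2)/sin²θ · g`
equals `(L(P) + κ D(P))(cos θ) · sin θ` on `(0,π)`. -/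
theorem conjugated_operator_on_polynomials (n : ℕ) (hn : 2 ≤ n) (κ : ℝ)
    (P : Polynomial ℝ) (θ : ℝ) (hθ : θ ∈ Set.Ioo 0 π) :
    -(Real.sin θ ^ (n - 2))⁻¹ * Real.exp (-(κ * Real.cos θ)) *
        deriv (fun t : ℝ => Real.sin t ^ (n - 2) * Real.exp (κ * Real.cos t) *
          deriv (fun s : ℝ => P.eval (Real.cos s) * Real.sin s) t) θ
      + ((n : ℝ) - 2) / Real.sin θ ^ 2 * (P.eval (Real.cos θ) * Real.sin θ)
      = ((Lop n P).eval (Real.cos θ) + κ * (Dop P).eval (Real.cos θ)) * Real.sin θ := by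
  have hsin : sin θ ≠ 0 := (sin_pos_of_pos_of_lt_pi hθ.1 hθ.2).ne'
  have hg' : deriv (fun s => P.eval (cos s) * sin s) = fun t => (Dop P).eval (cos t) :=
    funext fun t => (hasDerivAt_eval_cos_mul_sin P t).deriv
  simp only [hg']
  rw [((hasDerivAt_sin_pow_mul_exp_cos (n - 2) κ hsin).fun_mul
    (hasDerivAt_eval_cos (Dop P) θ)).deriv, Lop_eq_derivative_Dop_add_C_mul]
  have hXD := congrArg (eval (cos θ)) (X_mul_Dop_sub_self P)
  simp only [eval_sub, eval_mul, eval_X, eval_neg, eval_pow, eval_one] at hXD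
  simp only [eval_add, eval_mul, eval_C, Nat.cast_sub hn, Nat.cast_ofNat]
  rw [exp_neg]
  field_simp
  linear_combination (2 - (n : ℝ)) * hXD
    + (2 - (n : ℝ)) * (derivative (X * P)).eval (cos θ) * sin_sq_add_cos_sq θ
end

section
/- (Watson's Lemma.) Let T > 0, let p be integrable on (0,T), let β > −1, N ≥ 1 an integer, and a₀,…,a_{N−1} real numbers such that p(t) − t^β Σ_{i=0}^{N−1} a_i t^i = O(t^{β+N}) as t → 0⁺. Then, as κ → +∞, ∫_0^T p(t) e^{−κt} dt − Σ_{i=0}^{N−1} a_i Γ(β+i+1) κ^{−β−1−i} = O(κ^{−β−1−N}), where Γ is the Gamma function. -/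
/-!
Split `p(t) = t^β Σ aᵢ tⁱ + R(t)` with `R(t) = O(t^{β+N})` near `0`. Each monomial contributes
`aᵢ ∫_0^T t^{β+i} e^{-κt} dt`, which differs from `aᵢ Γ(β+i+1) κ^{-β-1-i}` (the integral over
`(0, ∞)`) by a tail over `(T, ∞)` that decays like `e^{-Tκ}`. For the remainder, bound `|R(t)|` by
`C t^{β+N}` on `(0, δ)` and use `e^{-κt} ≤ e^{-δκ}` on `[δ, T]`: this gives
`C Γ(β+N+1) κ^{-β-1-N} + ‖R‖₁ e^{-δκ}`.
-/

open MeasureTheory Real Filter Asymptotics Set Topology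

lemma integrableOn_rpow_mul_exp_neg_mul_Ioi {b κ : ℝ} (hb : -1 < b) (hκ : 0 < κ) :
    IntegrableOn (fun t : ℝ => t ^ b * exp (-κ * t)) (Ioi 0) := by
  simpa only [rpow_one] using integrableOn_rpow_mul_exp_neg_mul_rpow hb one_pos hκ

lemma integral_Ioi_rpow_mul_exp_neg_mul {b κ : ℝ} (hb : -1 < b) (hκ : 0 < κ) :
    ∫ t in Ioi 0, t ^ b * exp (-κ * t) = Gamma (b + 1) * κ ^ (-b - 1) := by
  have h := integral_rpow_mul_exp_neg_mul_Ioi (a := b + 1) (by linarith) hκ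
  rw [add_sub_cancel_right, one_div, inv_rpow hκ.le, ← rpow_neg hκ.le, neg_add'] at h
  simpa only [neg_mul, mul_comm (Gamma _)] using h

lemma MeasureTheory.IntegrableOn.mul_exp_neg_mul {f : ℝ → ℝ} {s : Set ℝ} {κ : ℝ}
    (hf : IntegrableOn f s) (hs : MeasurableSet s) (hs₀ : s ⊆ Ici 0) (hκ : 0 ≤ κ) :
    IntegrableOn (fun t => f t * exp (-κ * t)) s := by
  refine hf.mul_bdd (c := 1) (by fun_prop) ((ae_restrict_iff' hs).2 (ae_of_all _ fun t ht => ?_))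
  rw [norm_of_nonneg (exp_pos _).le, exp_le_one_iff]
  nlinarith [mem_Ici.1 (hs₀ ht)]

lemma integral_Ioi_rpow_mul_exp_neg_mul_isBigO_exp {b T : ℝ} (hb : -1 < b) (hT : 0 ≤ T) :
    (fun κ => ∫ t in Ioi T, t ^ b * exp (-κ * t)) =O[atTop] fun κ => exp (-T * κ) := by
  have hint : IntegrableOn (fun t : ℝ => t ^ b * exp (-1 * t)) (Ioi T) :=
    (integrableOn_rpow_mul_exp_neg_mul_Ioi hb one_pos).mono_set (Ioi_subset_Ioi hT)
  refine IsBigO.of_bound ((∫ t in Ioi T, t ^ b * exp (-1 * t)) * exp T) ?_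
  filter_upwards [eventually_ge_atTop 1] with κ hκ
  -- for `t > T`, `e^{-κt} = e^{-t} e^{-(κ-1)t} ≤ e^{-t} e^{-(κ-1)T}`
  have hle : ∀ t ∈ Ioi T,
      ‖t ^ b * exp (-κ * t)‖ ≤ t ^ b * exp (-1 * t) * exp (-(κ - 1) * T) := by
    intro t ht
    have ht₀ : 0 ≤ t := hT.trans (le_of_lt ht)
    rw [norm_of_nonneg (by positivity), mul_assoc, ← exp_add]
    gcongr
    nlinarith [mem_Ioi.1 ht]
  calc ‖∫ t in Ioi T, t ^ b * exp (-κ * t)‖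
      ≤ ∫ t in Ioi T, t ^ b * exp (-1 * t) * exp (-(κ - 1) * T) :=
        norm_integral_le_of_norm_le (hint.mul_const _)
          ((ae_restrict_iff' measurableSet_Ioi).2 (ae_of_all _ hle))
    _ = (∫ t in Ioi T, t ^ b * exp (-1 * t)) * exp T * ‖exp (-T * κ)‖ := by
        rw [integral_mul_const, norm_of_nonneg (exp_pos _).le, mul_assoc, ← exp_add]
        ring_nf

lemma integral_Ioc_rpow_mul_exp_neg_mul_sub_isBigO_exp {b T : ℝ} (hb : -1 < b) (hT : 0 ≤ T) :
    (fun κ => (∫ t in Ioc 0 T, t ^ b * exp (-κ * t)) - Gamma (b + 1) * κ ^ (-b - 1))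
      =O[atTop] fun κ => exp (-T * κ) := by
  refine (integral_Ioi_rpow_mul_exp_neg_mul_isBigO_exp hb hT).neg_left.congr' ?_ EventuallyEq.rfl
  filter_upwards [eventually_gt_atTop 0] with κ hκ
  have hint := integrableOn_rpow_mul_exp_neg_mul_Ioi hb hκ
  rw [← integral_Ioi_rpow_mul_exp_neg_mul hb hκ, ← Ioc_union_Ioi_eq_Ioi hT,
    setIntegral_union (Ioc_disjoint_Ioi le_rfl) measurableSet_Ioi
      (hint.mono_set Ioc_subset_Ioi_self) (hint.mono_set (Ioi_subset_Ioi hT))]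
  ring

lemma integral_Ioc_rpow_mul_exp_neg_mul_isBigO {b : ℝ} (hb : -1 < b) (T : ℝ) :
    (fun κ => ∫ t in Ioc 0 T, t ^ b * exp (-κ * t)) =O[atTop] fun κ => κ ^ (-b - 1) := by
  refine IsBigO.of_bound (Gamma (b + 1)) ?_
  filter_upwards [eventually_gt_atTop 0] with κ hκ
  have hnonneg : ∀ t ∈ Ioi (0 : ℝ), 0 ≤ t ^ b * exp (-κ * t) := fun t ht => by
    have : 0 ≤ t := le_of_lt ht
    positivity
  rw [norm_of_nonneg (rpow_pos_of_pos hκ _).le, ← integral_Ioi_rpow_mul_exp_neg_mul hb hκ,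
    norm_of_nonneg (setIntegral_nonneg measurableSet_Ioc fun t ht => hnonneg t ht.1)]
  exact setIntegral_mono_set (integrableOn_rpow_mul_exp_neg_mul_Ioi hb hκ)
    ((ae_restrict_iff' measurableSet_Ioi).2 (ae_of_all _ hnonneg))
    Ioc_subset_Ioi_self.eventuallyLE

lemma integral_Ioc_mul_exp_neg_mul_isBigO_of_isBigO_rpow {f : ℝ → ℝ} {s T : ℝ} (hs : -1 < s)
    (hf : IntegrableOn f (Ioc 0 T)) (hf₀ : f =O[𝓝[>] 0] fun t => t ^ s) :
    (fun κ => ∫ t in Ioc 0 T, f t * exp (-κ * t)) =O[atTop] fun κ => κ ^ (-s - 1) := by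
  obtain ⟨C, hC, hCf⟩ := hf₀.exists_nonneg
  obtain ⟨δ, hδ, hδf⟩ := (nhdsGT_basis (0 : ℝ)).eventually_iff.1 hCf.bound
  have hbound : ∀ κ, 0 ≤ κ → ∀ t ∈ Ioc 0 T,
      ‖f t * exp (-κ * t)‖ ≤ C * (t ^ s * exp (-κ * t)) + ‖f t‖ * exp (-δ * κ) := by
    intro κ hκ t ht
    rw [norm_mul, norm_of_nonneg (exp_pos _).le]
    rcases lt_or_ge t δ with htδ | htδ
    · have h := hδf ⟨ht.1, htδ⟩
      rw [norm_of_nonneg (rpow_nonneg ht.1.le _)] at h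
      have : 0 ≤ ‖f t‖ * exp (-δ * κ) := by positivity
      nlinarith [exp_pos (-κ * t)]
    · have : exp (-κ * t) ≤ exp (-δ * κ) := exp_le_exp.2 (by nlinarith)
      have : 0 ≤ C * (t ^ s * exp (-κ * t)) := by have := ht.1.le; positivity
      nlinarith [norm_nonneg (f t)]
  have hbig : (fun κ => C * (∫ t in Ioc 0 T, t ^ s * exp (-κ * t))
      + (∫ t in Ioc 0 T, ‖f t‖) * exp (-δ * κ)) =O[atTop] fun κ => κ ^ (-s - 1) :=
    ((integral_Ioc_rpow_mul_exp_neg_mul_isBigO hs T).const_mul_left C).add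
      ((isLittleO_exp_neg_mul_rpow_atTop hδ _).isBigO.const_mul_left _)
  refine IsBigO.trans (IsBigO.of_bound' ?_) hbig
  filter_upwards [eventually_gt_atTop 0] with κ hκ
  have hint₁ : IntegrableOn (fun t => C * (t ^ s * exp (-κ * t))) (Ioc 0 T) :=
    ((integrableOn_rpow_mul_exp_neg_mul_Ioi hs hκ).mono_set Ioc_subset_Ioi_self).const_mul C
  have hint₂ : IntegrableOn (fun t => ‖f t‖ * exp (-δ * κ)) (Ioc 0 T) := hf.norm.mul_const _
  calc ‖∫ t in Ioc 0 T, f t * exp (-κ * t)‖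
      ≤ ∫ t in Ioc 0 T, (C * (t ^ s * exp (-κ * t)) + ‖f t‖ * exp (-δ * κ)) :=
        norm_integral_le_of_norm_le (hint₁.add hint₂)
          ((ae_restrict_iff' measurableSet_Ioc).2 (ae_of_all _ (hbound κ hκ.le)))
    _ = C * (∫ t in Ioc 0 T, t ^ s * exp (-κ * t))
          + (∫ t in Ioc 0 T, ‖f t‖) * exp (-δ * κ) := by
        rw [integral_add hint₁ hint₂, integral_const_mul, integral_mul_const]
    _ ≤ _ := le_norm_self _

lemma rpow_mul_sum_pow {t : ℝ} (ht : 0 < t) (β : ℝ) (a : ℕ → ℝ) (N : ℕ) :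
    t ^ β * ∑ i ∈ Finset.range N, a i * t ^ i = ∑ i ∈ Finset.range N, a i * t ^ (β + i) := by
  rw [Finset.mul_sum]
  refine Finset.sum_congr rfl fun i _ => ?_
  rw [rpow_add ht, rpow_natCast]
  ring

lemma integrableOn_rpow_mul_sum_pow {β : ℝ} (hβ : -1 < β) (a : ℕ → ℝ) (N : ℕ) (T : ℝ) :
    IntegrableOn (fun t => t ^ β * ∑ i ∈ Finset.range N, a i * t ^ i) (Ioc 0 T) := by
  refine IntegrableOn.congr_fun ?_ (fun t ht => (rpow_mul_sum_pow ht.1 β a N).symm)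
    measurableSet_Ioc
  refine integrable_finsetSum _ fun i _ =>
    (intervalIntegral.intervalIntegrable_rpow' ?_).1.const_mul (a i)
  linarith [i.cast_nonneg (α := ℝ)]

lemma integral_Ioc_rpow_mul_sum_pow_mul_exp {β κ : ℝ} (hβ : -1 < β) (hκ : 0 < κ) (a : ℕ → ℝ)
    (N : ℕ) (T : ℝ) :
    ∫ t in Ioc 0 T, t ^ β * (∑ i ∈ Finset.range N, a i * t ^ i) * exp (-κ * t)
      = ∑ i ∈ Finset.range N, a i * ∫ t in Ioc 0 T, t ^ (β + i) * exp (-κ * t) := by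
  have hint : ∀ i : ℕ, IntegrableOn (fun t => a i * (t ^ (β + i) * exp (-κ * t))) (Ioc 0 T) :=
    fun i => ((integrableOn_rpow_mul_exp_neg_mul_Ioi (by linarith [i.cast_nonneg (α := ℝ)]) hκ
      ).mono_set Ioc_subset_Ioi_self).const_mul (a i)
  rw [setIntegral_congr_fun measurableSet_Ioc (g := fun t =>
      ∑ i ∈ Finset.range N, a i * (t ^ (β + i) * exp (-κ * t))) fun t ht => by
        simp only [rpow_mul_sum_pow ht.1, Finset.sum_mul, mul_assoc],
    integral_finsetSum _ fun i _ => hint i]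
  simp only [integral_const_mul]

theorem watson_lemma_general (T : ℝ) (hT : 0 < T) (p : ℝ → ℝ)
    (hp : IntegrableOn p (Set.Ioc 0 T)) (β : ℝ) (hβ : -1 < β) (N : ℕ)
    (a : ℕ → ℝ)
    (hasymp : (fun t : ℝ => p t - t ^ β * ∑ i ∈ Finset.range N, a i * t ^ i)
      =O[nhdsWithin 0 (Set.Ioi 0)] fun t : ℝ => t ^ (β + N)) :
    (fun κ : ℝ => (∫ t in (0:ℝ)..T, p t * Real.exp (-κ * t)) -
        ∑ i ∈ Finset.range N, a i * Real.Gamma (β + i + 1) * κ ^ (-β - 1 - i))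
      =O[atTop] fun κ : ℝ => κ ^ (-β - 1 - N) := by
  have hβi : ∀ i : ℕ, -1 < β + i := fun i => by linarith [i.cast_nonneg (α := ℝ)]
  have hP := integrableOn_rpow_mul_sum_pow hβ a N T
  have hremainder := integral_Ioc_mul_exp_neg_mul_isBigO_of_isBigO_rpow (hβi N) (hp.sub hP) hasymp
  have hterms : ∀ i ∈ Finset.range N, (fun κ : ℝ => a i * ((∫ t in Ioc 0 T,
      t ^ (β + i) * exp (-κ * t)) - Gamma (β + i + 1) * κ ^ (-(β + i) - 1)))
      =O[atTop] fun κ => κ ^ (-(β + N) - 1) :=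
    fun i _ => ((integral_Ioc_rpow_mul_exp_neg_mul_sub_isBigO_exp (hβi i) hT.le).trans
      (isLittleO_exp_neg_mul_rpow_atTop hT _).isBigO).const_mul_left (a i)
  refine (hremainder.add (IsBigO.fun_sum hterms)).congr' ?_ (.of_forall fun κ => by ring_nf)
  filter_upwards [eventually_gt_atTop 0] with κ hκ
  rw [intervalIntegral.integral_of_le hT.le]
  simp only [Pi.sub_apply, sub_mul]
  rw [integral_sub (hp.mul_exp_neg_mul measurableSet_Ioc (fun _ ht => ht.1.le) hκ.le)
    (hP.mul_exp_neg_mul measurableSet_Ioc (fun _ ht => ht.1.le) hκ.le),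
    integral_Ioc_rpow_mul_sum_pow_mul_exp hβ hκ]
  simp only [mul_sub, Finset.sum_sub_distrib]
  ring_nf

/-- **Watson's Lemma.** If `p(t) = t^β (a₀ + a₁ t + ⋯ + a_{N−1} t^{N−1}) + O(t^{β+N})`
as `t → 0⁺`, then `∫_0^T p(t) e^{−κt} dt = Σ_{i<N} a_i Γ(β+i+1) κ^{−β−1−i}
+ O(κ^{−β−1−N})` as `κ → ∞`. -/
theorem watson_lemma (T : ℝ) (hT : 0 < T) (p : ℝ → ℝ)
    (hp : IntegrableOn p (Set.Ioc 0 T)) (β : ℝ) (hβ : -1 < β) (N : ℕ) (hN : 1 ≤ N)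
    (a : ℕ → ℝ)
    (hasymp : (fun t : ℝ => p t - t ^ β * ∑ i ∈ Finset.range N, a i * t ^ i)
      =O[nhdsWithin 0 (Set.Ioi 0)] fun t : ℝ => t ^ (β + N)) :
    (fun κ : ℝ => (∫ t in (0:ℝ)..T, p t * Real.exp (-κ * t)) -
        ∑ i ∈ Finset.range N, a i * Real.Gamma (β + i + 1) * κ ^ (-β - 1 - i))
      =O[atTop] fun κ : ℝ => κ ^ (-β - 1 - N) :=
  watson_lemma_general T hT p hp β hβ N a hasymp
end

section
/- Let n ≥ 2 be an integer and β > −(n−1)/2 a real number. Let f : (0,π) → ℝ be measurable such that θ ↦ f(θ)·(sin θ)^{n−2} is integrable on (0,π) and f(θ) = O(θ^{2β}) as θ → 0⁺. Then ⟨f⟩_{M_κ} = O(κ^{−β}) as κ → +∞. -/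
/-!
With `m = n - 2` and `g = f · sin^m` we have `g(θ) = O(θ^p)` at `0⁺`, where `p = 2β + m > -1`.
This is Laplace's method at the maximum `θ = 0` of `cos`. On `(0, δ)` the bound
`cos θ ≤ 1 - 2θ²/π²` dominates the numerator by `e^κ` times the Gaussian moment
`∫₀^∞ θ^p e^{-2κθ²/π²} ∝ κ^{-(p+1)/2}`, while on `[δ, π)` the weight is at most `e^{κ cos δ}`,
which is exponentially smaller. Restricting the denominator to `(0, κ^{-1/2})`, where
`κ cos θ ≥ κ - 1/2` and `sin θ ≥ 2θ/π`, bounds it below by a multiple of `e^κ κ^{-(m+1)/2}`.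
The quotient is therefore `O(κ^{(m+1)/2 - (p+1)/2}) = O(κ^{-β})`.
-/

open MeasureTheory Real Filter Asymptotics

/-- The average `⟨f⟩_{M_κ}` of a function `f` on `(0,π)` against the density
`e^{κ cos θ} sin^{n−2} θ`. -/
noncomputable def sphAvg (n : ℕ) (f : ℝ → ℝ) (κ : ℝ) : ℝ :=
  (∫ θ in Set.Ioo 0 π, f θ * Real.exp (κ * Real.cos θ) * Real.sin θ ^ (n - 2)) /
  (∫ θ in Set.Ioo 0 π, Real.exp (κ * Real.cos θ) * Real.sin θ ^ (n - 2))

open Set Topology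

theorem integral_rpow_mul_exp_neg_mul_sq {p b : ℝ} (hp : -1 < p) (hb : 0 < b) :
    ∫ x in Ioi (0 : ℝ), x ^ p * exp (-b * x ^ 2) =
      b ^ (-(p + 1) / 2) * (1 / 2) * Gamma ((p + 1) / 2) := by
  simpa only [rpow_two] using integral_rpow_mul_exp_neg_mul_rpow two_pos hp hb

theorem Asymptotics.IsBigO.mul_sin_pow {f : ℝ → ℝ} {q : ℝ}
    (hf : f =O[𝓝[>] 0] fun θ => θ ^ q) (m : ℕ) :
    (fun θ => f θ * sin θ ^ m) =O[𝓝[>] 0] fun θ => θ ^ (q + m) := by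
  have hsin : (fun θ => sin θ ^ m) =O[𝓝[>] 0] fun θ => θ ^ m :=
    isBigO_of_le _ fun θ => by
      simpa only [norm_pow, norm_eq_abs] using pow_le_pow_left₀ (abs_nonneg _) abs_sin_le_abs m
  refine (hf.mul hsin).congr' .rfl ?_
  filter_upwards [self_mem_nhdsWithin] with θ (hθ : 0 < θ)
  rw [rpow_add hθ, rpow_natCast]

section Laplace

variable {g : ℝ → ℝ} {p : ℝ}

theorem abs_mul_exp_mul_cos_le {C δ κ θ : ℝ} (hC : 0 ≤ C) (hδ : 0 ≤ δ) (hκ : 0 ≤ κ)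
    (hgC : ∀ θ ∈ Ioo 0 δ, |g θ| ≤ C * θ ^ p) (hθ : θ ∈ Ioo 0 π) :
    |g θ| * exp (κ * cos θ) ≤
      C * exp κ * (θ ^ p * exp (-(2 / π ^ 2 * κ) * θ ^ 2)) + exp (κ * cos δ) * |g θ| := by
  obtain ⟨hθ0, hθπ⟩ := hθ
  have := rpow_pos_of_pos hθ0 p
  rcases lt_or_ge θ δ with hθδ | hδθ
  · have hcos := cos_le_one_sub_mul_cos_sq (x := θ) (by rw [abs_of_pos hθ0]; exact hθπ.le)
    have hexp : exp (κ * cos θ) ≤ exp κ * exp (-(2 / π ^ 2 * κ) * θ ^ 2) := by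
      rw [← exp_add, exp_le_exp]; nlinarith
    calc |g θ| * exp (κ * cos θ)
        ≤ C * θ ^ p * (exp κ * exp (-(2 / π ^ 2 * κ) * θ ^ 2)) :=
          mul_le_mul (hgC θ ⟨hθ0, hθδ⟩) hexp (exp_pos _).le (by positivity)
      _ ≤ _ := le_add_of_le_of_nonneg (le_of_eq (by ring)) (by positivity)
  · have hexp : exp (κ * cos θ) ≤ exp (κ * cos δ) :=
      exp_le_exp.2 <|
        mul_le_mul_of_nonneg_left (cos_le_cos_of_nonneg_of_le_pi hδ hθπ.le hδθ) hκ
    calc |g θ| * exp (κ * cos θ) ≤ exp (κ * cos δ) * |g θ| := by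
          rw [mul_comm]; exact mul_le_mul_of_nonneg_right hexp (abs_nonneg _)
      _ ≤ _ := le_add_of_nonneg_left (by positivity)

theorem norm_integral_mul_exp_mul_cos_le (hg : IntegrableOn g (Ioo 0 π)) (hp : -1 < p)
    {C δ : ℝ} (hC : 0 ≤ C) (hδ : 0 ≤ δ)
    (hgC : ∀ θ ∈ Ioo 0 δ, |g θ| ≤ C * θ ^ p) {κ : ℝ} (hκ : 0 < κ) :
    ‖∫ θ in Ioo 0 π, g θ * exp (κ * cos θ)‖ ≤
      C * exp κ * (∫ θ in Ioi 0, θ ^ p * exp (-(2 / π ^ 2 * κ) * θ ^ 2)) +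
        exp (κ * cos δ) * ∫ θ in Ioo 0 π, |g θ| := by
  have hgauss := integrableOn_rpow_mul_exp_neg_mul_sq (b := 2 / π ^ 2 * κ) (by positivity) hp
  have hgauss' :=
    (hgauss.mono_set (Ioo_subset_Ioi_self : Ioo 0 π ⊆ Ioi 0)).const_mul (C * exp κ)
  have hle : ∀ θ ∈ Ioo 0 π, ‖g θ * exp (κ * cos θ)‖ ≤
      C * exp κ * (θ ^ p * exp (-(2 / π ^ 2 * κ) * θ ^ 2)) + exp (κ * cos δ) * |g θ| := by
    intro θ hθ
    rw [norm_mul, norm_of_nonneg (exp_pos _).le, norm_eq_abs]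
    exact abs_mul_exp_mul_cos_le hC hδ hκ.le hgC hθ
  calc ‖∫ θ in Ioo 0 π, g θ * exp (κ * cos θ)‖
      ≤ ∫ θ in Ioo 0 π, (C * exp κ * (θ ^ p * exp (-(2 / π ^ 2 * κ) * θ ^ 2)) +
          exp (κ * cos δ) * |g θ|) :=
        norm_integral_le_of_norm_le (hgauss'.add (hg.abs.const_mul _))
          ((ae_restrict_iff' measurableSet_Ioo).2 (ae_of_all _ hle))
    _ = C * exp κ * (∫ θ in Ioo 0 π, θ ^ p * exp (-(2 / π ^ 2 * κ) * θ ^ 2)) +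
          exp (κ * cos δ) * ∫ θ in Ioo 0 π, |g θ| := by
        rw [integral_add hgauss' (hg.abs.const_mul _), integral_const_mul, integral_const_mul]
    _ ≤ _ := by
        gcongr
        · filter_upwards [ae_restrict_mem measurableSet_Ioi] with θ (hθ : 0 < θ)
          positivity
        · exact Ioo_subset_Ioi_self

theorem isBigO_integral_mul_exp_mul_cos_atTop (hg : IntegrableOn g (Ioo 0 π)) (hp : -1 < p)
    (hgp : g =O[𝓝[>] 0] fun θ => θ ^ p) :
    (fun κ => ∫ θ in Ioo 0 π, g θ * exp (κ * cos θ)) =O[atTop]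
      fun κ => exp κ * κ ^ (-(p + 1) / 2) := by
  obtain ⟨C, hC, hgC⟩ := hgp.exists_nonneg
  obtain ⟨δ, hδ, hδC⟩ := (nhdsGT_basis 0).eventually_iff.1 hgC.bound
  have hgδ : ∀ θ ∈ Ioo 0 δ, |g θ| ≤ C * θ ^ p := fun θ hθ => by
    simpa only [norm_eq_abs, abs_of_pos (rpow_pos_of_pos hθ.1 p)] using hδC hθ
  have hcosδ : cos (min δ π) < 1 := by
    simpa using cos_lt_cos_of_nonneg_of_le_pi le_rfl (min_le_right δ π) (lt_min hδ pi_pos)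
  have hnear : (fun κ => C * exp κ *
      (∫ θ in Ioi 0, θ ^ p * exp (-(2 / π ^ 2 * κ) * θ ^ 2))) =O[atTop]
        fun κ => exp κ * κ ^ (-(p + 1) / 2) := by
    refine (isBigO_refl _ _).const_mul_left ((2 / π ^ 2) ^ (-(p + 1) / 2) * (1 / 2) *
      Gamma ((p + 1) / 2) * C) |>.congr' ?_ .rfl
    filter_upwards [eventually_gt_atTop 0] with κ hκ
    rw [integral_rpow_mul_exp_neg_mul_sq hp (by positivity), mul_rpow (by positivity) hκ.le]
    ring
  have hfar : (fun κ => exp (κ * cos (min δ π)) * ∫ θ in Ioo 0 π, |g θ|) =O[atTop]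
      fun κ => exp κ * κ ^ (-(p + 1) / 2) := by
    have hdecay := (isLittleO_exp_neg_mul_rpow_atTop (sub_pos.2 hcosδ) (-(p + 1) / 2)).isBigO
    refine ((isBigO_refl exp atTop).mul hdecay).const_mul_left (∫ θ in Ioo 0 π, |g θ|)
      |>.congr' (.of_forall fun κ => ?_) .rfl
    dsimp only
    rw [mul_comm, ← exp_add]
    ring_nf
  refine (IsBigO.of_norm_eventuallyLE ?_).trans (hnear.add hfar)
  filter_upwards [eventually_gt_atTop 0] with κ hκ
  have hgδπ : ∀ θ ∈ Ioo 0 (min δ π), |g θ| ≤ C * θ ^ p :=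
    fun θ hθ => hgδ θ ⟨hθ.1, hθ.2.trans_le (min_le_left δ π)⟩
  exact norm_integral_mul_exp_mul_cos_le hg hp hC (le_min hδ.le pi_pos.le) hgδπ hκ

end Laplace

theorem le_integral_exp_mul_cos_mul_sin_pow (m : ℕ) {κ a : ℝ} (hκ : 0 ≤ κ) (ha : 0 ≤ a)
    (haπ : a ≤ π / 2) :
    exp (κ * (1 - a ^ 2 / 2)) * (2 / π) ^ m * (a ^ (m + 1) / (m + 1)) ≤
      ∫ θ in Ioo 0 π, exp (κ * cos θ) * sin θ ^ m := by
  have hcont : ∀ b, IntegrableOn (fun θ => exp (κ * cos θ) * sin θ ^ m) (Ioo 0 b) := fun b =>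
    (Continuous.integrableOn_Icc (by fun_prop)).mono_set Ioo_subset_Icc_self
  have haπ' : a ≤ π := by linarith [pi_pos]
  calc exp (κ * (1 - a ^ 2 / 2)) * (2 / π) ^ m * (a ^ (m + 1) / (m + 1))
      = ∫ θ in Ioo 0 a, exp (κ * (1 - a ^ 2 / 2)) * (2 / π) ^ m * θ ^ m := by
        rw [integral_const_mul, ← integral_Ioc_eq_integral_Ioo,
          ← intervalIntegral.integral_of_le ha, integral_pow]
        simp
    _ ≤ ∫ θ in Ioo 0 a, exp (κ * cos θ) * sin θ ^ m := by
        refine setIntegral_mono_on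
          ((Continuous.integrableOn_Icc (by fun_prop)).mono_set Ioo_subset_Icc_self)
          (hcont a) measurableSet_Ioo ?_
        rintro θ ⟨hθ0, hθa⟩
        have hcos : κ * (1 - a ^ 2 / 2) ≤ κ * cos θ := by
          refine mul_le_mul_of_nonneg_left ((?_ : 1 - a ^ 2 / 2 ≤ 1 - θ ^ 2 / 2).trans
            one_sub_sq_div_two_le_cos) hκ
          nlinarith
        have hsin : (2 / π) ^ m * θ ^ m ≤ sin θ ^ m := by
          rw [← mul_pow]
          exact pow_le_pow_left₀ (by positivity) (mul_le_sin hθ0.le (by linarith)) m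
        rw [mul_assoc]
        exact mul_le_mul (exp_le_exp.2 hcos) hsin (by positivity) (exp_pos _).le
    _ ≤ ∫ θ in Ioo 0 π, exp (κ * cos θ) * sin θ ^ m := by
        refine setIntegral_mono_set (hcont π) ?_ (Ioo_subset_Ioo_right haπ').eventuallyLE
        filter_upwards [ae_restrict_mem measurableSet_Ioo] with θ ⟨hθ0, hθπ⟩
        have := sin_nonneg_of_nonneg_of_le_pi hθ0.le hθπ.le
        positivity

theorem isBigO_integral_exp_mul_cos_mul_sin_pow_atTop (m : ℕ) :
    (fun κ => exp κ * κ ^ (-((m : ℝ) + 1) / 2)) =O[atTop]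
      fun κ => ∫ θ in Ioo 0 π, exp (κ * cos θ) * sin θ ^ m := by
  refine IsBigO.of_bound (exp (1 / 2) * (π / 2) ^ m * (m + 1)) ?_
  filter_upwards [eventually_ge_atTop 1] with κ hκ
  have hκ0 : 0 < κ := one_pos.trans_le hκ
  set a := κ ^ (-(1 : ℝ) / 2)
  have ha : 0 < a := rpow_pos_of_pos hκ0 _
  have haπ : a ≤ π / 2 := (rpow_le_one_of_one_le_of_nonpos hκ (by norm_num)).trans
    (by linarith [pi_gt_three])
  have hκa : κ * a ^ 2 = 1 := by
    rw [← rpow_natCast, ← rpow_mul hκ0.le]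
    norm_num [rpow_neg_one, hκ0.ne']
  have ham : a ^ (m + 1) = κ ^ (-((m : ℝ) + 1) / 2) := by
    rw [← rpow_natCast, ← rpow_mul hκ0.le]; push_cast; ring_nf
  have hlow := le_integral_exp_mul_cos_mul_sin_pow m hκ0.le ha.le haπ
  rw [ham, show κ * (1 - a ^ 2 / 2) = κ - 1 / 2 by linear_combination -hκa / 2] at hlow
  rw [norm_of_nonneg (by positivity), norm_of_nonneg ((by positivity : (0:ℝ) ≤ _).trans hlow)]
  calc exp κ * κ ^ (-((m : ℝ) + 1) / 2)
      = exp (1 / 2) * (π / 2) ^ m * (m + 1) *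
          (exp (κ - 1 / 2) * (2 / π) ^ m * (κ ^ (-((m : ℝ) + 1) / 2) / (m + 1))) := by
        rw [exp_sub, div_pow, div_pow]
        field_simp
    _ ≤ _ := by gcongr

theorem sphAvg_isBigO_atTop_general (n : ℕ) (β : ℝ) (hβ : -(((n : ℝ) - 1) / 2) < β)
    (f : ℝ → ℝ)
    (hint : IntegrableOn (fun θ => f θ * Real.sin θ ^ (n - 2)) (Set.Ioo 0 π))
    (hasymp : f =O[nhdsWithin 0 (Set.Ioi 0)] fun θ : ℝ => θ ^ (2 * β)) :
    (fun κ : ℝ => sphAvg n f κ) =O[atTop] fun κ : ℝ => κ ^ (-β) := by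
  -- `n - 2` is truncated subtraction: only `n ≤ (n - 2) + 2` holds in general.
  have hp : -1 < 2 * β + (n - 2 : ℕ) := by
    have : (n : ℝ) ≤ (n - 2 : ℕ) + 2 := by exact_mod_cast (by omega : n ≤ n - 2 + 2)
    linarith
  have hnum := isBigO_integral_mul_exp_mul_cos_atTop hint hp (hasymp.mul_sin_pow (n - 2))
  have hden := (isBigO_integral_exp_mul_cos_mul_sin_pow_atTop (n - 2)).inv_rev <| by
    filter_upwards [eventually_gt_atTop 0] with κ hκ h
    exact absurd h (by positivity)
  refine (hnum.mul hden).congr' (.of_forall fun κ => ?_) ?_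
  · simp only [sphAvg, div_eq_mul_inv, mul_right_comm]
  · filter_upwards [eventually_gt_atTop 0] with κ hκ
    rw [mul_inv, ← rpow_neg hκ.le, mul_mul_mul_comm, mul_inv_cancel₀ (exp_pos κ).ne', one_mul,
      ← rpow_add hκ]
    ring_nf

/-- If `f(θ) = O(θ^{2β})` as `θ → 0⁺` and `f · sin^{n−2}` is integrable on `(0,π)`,
then `⟨f⟩_{M_κ} = O(κ^{−β})` as `κ → ∞`. -/
theorem sphAvg_isBigO_atTop (n : ℕ) (hn : 2 ≤ n) (β : ℝ) (hβ : -(((n : ℝ) - 1) / 2) < β)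
    (f : ℝ → ℝ) (hmeas : Measurable f)
    (hint : IntegrableOn (fun θ => f θ * Real.sin θ ^ (n - 2)) (Set.Ioo 0 π))
    (hasymp : f =O[nhdsWithin 0 (Set.Ioi 0)] fun θ : ℝ => θ ^ (2 * β)) :
    (fun κ : ℝ => sphAvg n f κ) =O[atTop] fun κ : ℝ => κ ^ (-β) :=
  sphAvg_isBigO_atTop_general n β hβ f hint hasymp
end

section
/- Let n ≥ 2 be an integer and define c₁(κ) := ⟨cos θ⟩_{M_κ}. Then, as κ → 0, c₁(κ) − κ/n + κ³/(n²(n+2)) = O(κ⁵). -/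
open MeasureTheory Real Filter Asymptotics

/-- The order parameter `c₁(κ) = ⟨cos θ⟩_{M_κ}`. -/
noncomputable def orderParam (n : ℕ) (κ : ℝ) : ℝ :=
  (∫ θ in Set.Ioo 0 π, Real.cos θ * Real.exp (κ * Real.cos θ) * Real.sin θ ^ (n - 2)) /
  (∫ θ in Set.Ioo 0 π, Real.exp (κ * Real.cos θ) * Real.sin θ ^ (n - 2))

/-!
Write `n = p + 2` and `Z_j(κ) = ∫₀^π cos^j θ e^{κ cos θ} sin^p θ dθ`, so that `c₁ = Z₁ / Z₀`.
Truncating the exponential after degree four turns `Z_j` into a polynomial in `κ`, up to an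
error `O(κ⁵)` that is uniform in `θ`; its coefficients are the moments `∫₀^π cos^k θ sin^p θ dθ`.
The odd moments vanish by the symmetry `θ ↦ π - θ`, and the even ones follow from
`cos² = 1 - sin²` and Wallis' recursion for `∫₀^π sin^p`. The truncations of `Z₁` and
`Z₀ · (κ/n - κ³/(n²(n+2)))` then agree up to degree four, and dividing by
`Z₀ → ∫₀^π sin^p > 0` gives the expansion.
-/

open scoped Topology Nat

noncomputable def cosMoment (p k : ℕ) : ℝ := ∫ x in 0..π, cos x ^ k * sin x ^ p

noncomputable def tiltedCosMoment (p k : ℕ) (κ : ℝ) : ℝ :=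
  ∫ x in 0..π, cos x ^ k * exp (κ * cos x) * sin x ^ p

theorem cosMoment_eq_zero_of_odd (p : ℕ) {k : ℕ} (hk : Odd k) : cosMoment p k = 0 := by
  have h := intervalIntegral.integral_comp_sub_left
    (fun x => cos x ^ k * sin x ^ p) (a := 0) (b := π) π
  simp only [cos_pi_sub, sin_pi_sub, hk.neg_pow, neg_mul, intervalIntegral.integral_neg,
    sub_self, sub_zero] at h
  unfold cosMoment
  linarith

theorem cosMoment_add_two (p k : ℕ) :
    cosMoment p (k + 2) = cosMoment p k - cosMoment (p + 2) k := by
  unfold cosMoment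
  rw [← intervalIntegral.integral_sub ((by fun_prop : Continuous _).intervalIntegrable _ _)
    ((by fun_prop : Continuous _).intervalIntegrable _ _)]
  congr 1 with x
  rw [pow_add, cos_sq']
  ring

theorem cosMoment_zero_pos (p : ℕ) : 0 < cosMoment p 0 := by
  simpa [cosMoment] using integral_sin_pow_pos p

theorem cosMoment_add_two_zero (p : ℕ) :
    cosMoment (p + 2) 0 = (p + 1) / (p + 2) * cosMoment p 0 := by
  simp [cosMoment, integral_sin_pow]

theorem cosMoment_two (p : ℕ) : cosMoment p 2 = cosMoment p 0 / (p + 2) := by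
  rw [cosMoment_add_two, cosMoment_add_two_zero]
  field_simp
  ring

theorem cosMoment_four (p : ℕ) :
    cosMoment p 4 = 3 * cosMoment p 0 / ((p + 2) * (p + 4)) := by
  rw [cosMoment_add_two, cosMoment_two, cosMoment_two, cosMoment_add_two_zero]
  push_cast
  field_simp
  ring

theorem continuous_tiltedCosMoment (p k : ℕ) : Continuous (tiltedCosMoment p k) :=
  intervalIntegral.continuous_parametric_intervalIntegral_of_continuous' (by fun_prop) 0 π

theorem tiltedCosMoment_zero (p k : ℕ) : tiltedCosMoment p k 0 = cosMoment p k := by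
  simp [tiltedCosMoment, cosMoment]

theorem tiltedCosMoment_sub_taylor_isBigO (p j : ℕ) {N : ℕ} (hN : 0 < N) :
    (fun κ => tiltedCosMoment p j κ - ∑ i ∈ Finset.range N, κ ^ i / i ! * cosMoment p (i + j))
      =O[𝓝 0] (· ^ N) := by
  set C : ℝ := N.succ / (N ! * N)
  refine IsBigO.of_bound (C * π) ?_
  filter_upwards [Metric.closedBall_mem_nhds (0 : ℝ) one_pos] with κ hκ
  rw [Metric.mem_closedBall, dist_zero_right, norm_eq_abs] at hκ
  have hsum : tiltedCosMoment p j κ - ∑ i ∈ Finset.range N, κ ^ i / i ! * cosMoment p (i + j) =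
      ∫ x in 0..π, cos x ^ j * (exp (κ * cos x) - ∑ i ∈ Finset.range N, (κ * cos x) ^ i / i !)
        * sin x ^ p := by
    simp only [cosMoment, tiltedCosMoment, ← intervalIntegral.integral_const_mul]
    rw [← intervalIntegral.integral_finsetSum
        fun _ _ => (by fun_prop : Continuous _).intervalIntegrable _ _,
      ← intervalIntegral.integral_sub ((by fun_prop : Continuous _).intervalIntegrable _ _)
        ((by fun_prop : Continuous _).intervalIntegrable _ _)]
    congr 1 with x
    simp only [mul_sub, sub_mul, Finset.mul_sum, Finset.sum_mul]
    congr 1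
    refine Finset.sum_congr rfl fun i _ => ?_
    ring
  have hbound : ∀ x, ‖cos x ^ j * (exp (κ * cos x) - ∑ i ∈ Finset.range N, (κ * cos x) ^ i / i !)
      * sin x ^ p‖ ≤ |κ| ^ N * C := fun x => by
    have hκcos : |κ * cos x| ≤ |κ| := by
      rw [abs_mul]
      exact mul_le_of_le_one_right (abs_nonneg κ) (abs_cos_le_one x)
    have htaylor := Real.exp_bound (hκcos.trans hκ) hN
    rw [norm_mul, norm_mul, norm_pow, norm_pow, norm_eq_abs, norm_eq_abs, norm_eq_abs]
    calc |cos x| ^ j * |exp (κ * cos x) - ∑ i ∈ Finset.range N, (κ * cos x) ^ i / i !|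
          * |sin x| ^ p
        ≤ 1 * (|κ| ^ N * C) * 1 := by
          gcongr
          · exact pow_le_one₀ (abs_nonneg _) (abs_cos_le_one x)
          · exact htaylor.trans (by gcongr)
          · exact pow_le_one₀ (abs_nonneg _) (abs_sin_le_one x)
      _ = |κ| ^ N * C := by ring
  rw [hsum, norm_pow]
  exact (intervalIntegral.norm_integral_le_of_norm_le_const fun x _ => hbound x).trans_eq
    (by rw [sub_zero, abs_of_pos pi_pos, norm_eq_abs]; ring)

theorem cosMoment_taylor_residual_isBigO (p : ℕ) :
    (fun κ : ℝ => (∑ i ∈ Finset.range 5, κ ^ i / i ! * cosMoment p (i + 1)) -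
      (∑ i ∈ Finset.range 5, κ ^ i / i ! * cosMoment p i) *
        (κ / (p + 2 : ℕ) - κ ^ 3 / (((p + 2 : ℕ) : ℝ) ^ 2 * ((p + 2 : ℕ) + 2))))
      =O[𝓝 0] (· ^ 5) := by
  norm_num [Finset.sum_range_succ, Nat.factorial, cosMoment_two, cosMoment_four,
    cosMoment_eq_zero_of_odd p (by decide : Odd 1), cosMoment_eq_zero_of_odd p (by decide : Odd 3),
    cosMoment_eq_zero_of_odd p (by decide : Odd 5)]
  have hp : (p : ℝ) + 2 ≠ 0 := by positivity
  refine ((isBigO_refl (· ^ 5) _).mul (((by fun_prop : Continuous fun κ : ℝ =>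
    cosMoment p 0 * (1 / (2 * (p + 2) ^ 3 * (p + 4)) - 1 / (8 * (p + 2) ^ 2 * (p + 4))
      + κ ^ 2 / (8 * (p + 2) ^ 3 * (p + 4) ^ 2))).tendsto 0).isBigO_one (F := ℝ))).congr
    (fun κ => ?_) (fun κ => mul_one _)
  field_simp
  ring

theorem isBigO_div_sub_of_approx {α : Type*} {l : Filter α} {f g fₐ gₐ q r : α → ℝ} {c : ℝ}
    (hc : c ≠ 0) (hg : Tendsto g l (𝓝 c)) (hq : q =O[l] fun _ => (1 : ℝ))
    (hfₐ : (fun x => f x - fₐ x) =O[l] r) (hgₐ : (fun x => g x - gₐ x) =O[l] r)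
    (hfg : (fun x => fₐ x - gₐ x * q x) =O[l] r) :
    (fun x => f x / g x - q x) =O[l] r := by
  have hnum : (fun x => f x - g x * q x) =O[l] r :=
    ((hfₐ.sub (by simpa using hgₐ.mul hq)).add hfg).congr_left fun x => by ring
  have hinv : (fun x => (g x)⁻¹) =O[l] fun _ => (1 : ℝ) := (hg.inv₀ hc).isBigO_one (F := ℝ)
  refine (hnum.mul hinv).congr' ?_ (.of_forall fun x => mul_one (r x))
  filter_upwards [hg.eventually_ne hc] with x hx
  field_simp

theorem orderParam_add_two (p : ℕ) (κ : ℝ) :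
    orderParam (p + 2) κ = tiltedCosMoment p 1 κ / tiltedCosMoment p 0 κ := by
  simp [orderParam, tiltedCosMoment, intervalIntegral.integral_of_le pi_pos.le,
    integral_Ioc_eq_integral_Ioo]

/-- Expansion of `c₁` near `κ = 0`:  `c₁(κ) = κ/n − κ³/(n²(n+2)) + O(κ⁵)`. -/
theorem orderParam_expansion_zero (n : ℕ) (hn : 2 ≤ n) :
    (fun κ : ℝ => orderParam n κ - κ / n + κ ^ 3 / ((n : ℝ) ^ 2 * ((n : ℝ) + 2)))
      =O[nhds 0] fun κ : ℝ => κ ^ 5 := by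
  obtain ⟨p, rfl⟩ : ∃ p, n = p + 2 := ⟨n - 2, by omega⟩
  have hq : (fun κ : ℝ => κ / (p + 2 : ℕ) - κ ^ 3 / (((p + 2 : ℕ) : ℝ) ^ 2 * ((p + 2 : ℕ) + 2)))
      =O[𝓝 0] fun _ => (1 : ℝ) :=
    ((by fun_prop : Continuous _).tendsto 0).isBigO_one (F := ℝ)
  have hZ₀ : Tendsto (tiltedCosMoment p 0) (𝓝 0) (𝓝 (cosMoment p 0)) :=
    tiltedCosMoment_zero p 0 ▸ (continuous_tiltedCosMoment p 0).tendsto 0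
  refine (isBigO_div_sub_of_approx (cosMoment_zero_pos p).ne' hZ₀ hq
    (tiltedCosMoment_sub_taylor_isBigO p 1 (N := 5) (by norm_num))
    (tiltedCosMoment_sub_taylor_isBigO p 0 (N := 5) (by norm_num))
    (cosMoment_taylor_residual_isBigO p)).congr_left fun κ => ?_
  rw [orderParam_add_two]
  ring
end

section
/- Let n ≥ 2 be an integer and define c₁(κ) := ⟨cos θ⟩_{M_κ}. Then, as κ → +∞, c₁(κ) − 1 + (n−1)/(2κ) − (n−1)(n−3)/(8κ²) = O(κ^{−3}). -/
/-!
Write `u = 1 - cos θ` and `⟨u^a⟩` for its moments under `M_κ` (with `m = n - 2`).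
Integrating `d/dθ (e^{κ cos θ} u^a sin^{m+1} θ)` over `[0, π]` gives the three-term recurrence
`κ (2⟨u^{a+1}⟩ - ⟨u^{a+2}⟩) = (2a+m+1)⟨u^a⟩ - (a+m+1)⟨u^{a+1}⟩`. Its instances `a = 0, 1`
determine `⟨u⟩ = 1 - c₁(κ)` as an explicit rational function of `κ` up to a term `κ² ⟨u³⟩`,
and a Laplace-type estimate (a Gaussian majorant from above, the window `θ < κ^{-1/2}` from
below) shows `⟨u^a⟩ = O(κ^{-a})`.
-/

open MeasureTheory Real Filter Asymptotics

open Set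

noncomputable section

/-- With `m = n - 2`, the integrand of the unnormalised moment `⟨(1 - cos θ)^a⟩_{M_κ}`. -/
def vonMisesIntegrand (m a : ℕ) (κ θ : ℝ) : ℝ :=
  (1 - cos θ) ^ a * exp (κ * cos θ) * sin θ ^ m

def vonMisesMoment (m a : ℕ) (κ : ℝ) : ℝ :=
  ∫ θ in Ioo 0 π, vonMisesIntegrand m a κ θ

def vonMisesAvg (m a : ℕ) (κ : ℝ) : ℝ :=
  vonMisesMoment m a κ / vonMisesMoment m 0 κ

end

section Recurrence

variable (m a : ℕ) (κ : ℝ)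

theorem continuous_vonMisesIntegrand : Continuous (vonMisesIntegrand m a κ) := by
  unfold vonMisesIntegrand
  fun_prop

theorem integrableOn_vonMisesIntegrand : IntegrableOn (vonMisesIntegrand m a κ) (Ioo 0 π) :=
  (continuous_vonMisesIntegrand m a κ).integrableOn_Icc.mono_set Ioo_subset_Icc_self

theorem vonMisesIntegrand_nonneg {θ : ℝ} (hθ : θ ∈ Icc 0 π) :
    0 ≤ vonMisesIntegrand m a κ θ := by
  have hu : 0 ≤ 1 - cos θ := by linarith [cos_le_one θ]
  have hs := sin_nonneg_of_nonneg_of_le_pi hθ.1 hθ.2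
  unfold vonMisesIntegrand
  positivity

theorem vonMisesMoment_nonneg : 0 ≤ vonMisesMoment m a κ :=
  setIntegral_nonneg measurableSet_Ioo fun _ hθ ↦
    vonMisesIntegrand_nonneg m a κ (Ioo_subset_Icc_self hθ)

theorem vonMisesMoment_eq_intervalIntegral :
    vonMisesMoment m a κ = ∫ θ in 0..π, vonMisesIntegrand m a κ θ := by
  rw [intervalIntegral.integral_of_le pi_pos.le, integral_Ioc_eq_integral_Ioo, vonMisesMoment]

theorem vonMisesMoment_zero_pos : 0 < vonMisesMoment m 0 κ := by
  rw [vonMisesMoment_eq_intervalIntegral]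
  refine intervalIntegral.intervalIntegral_pos_of_pos_on
    ((continuous_vonMisesIntegrand m 0 κ).intervalIntegrable 0 π) (fun θ hθ ↦ ?_) pi_pos
  have := sin_pos_of_pos_of_lt_pi hθ.1 hθ.2
  unfold vonMisesIntegrand
  positivity

theorem vonMisesAvg_zero : vonMisesAvg m 0 κ = 1 :=
  div_self (vonMisesMoment_zero_pos m κ).ne'

theorem vonMisesAvg_nonneg : 0 ≤ vonMisesAvg m a κ :=
  div_nonneg (vonMisesMoment_nonneg m a κ) (vonMisesMoment_nonneg m 0 κ)

theorem hasDerivAt_exp_mul_cos_mul_pow_mul_sin_pow (θ : ℝ) :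
    HasDerivAt (fun θ ↦ exp (κ * cos θ) * (1 - cos θ) ^ a * sin θ ^ (m + 1))
      ((2 * a + m + 1) * vonMisesIntegrand m a κ θ
        - (a + m + 1 + 2 * κ) * vonMisesIntegrand m (a + 1) κ θ
        + κ * vonMisesIntegrand m (a + 2) κ θ) θ := by
  have hexp := ((hasDerivAt_cos θ).const_mul κ).exp
  have hu := ((hasDerivAt_cos θ).const_sub 1).fun_pow a
  have hs := (hasDerivAt_sin θ).fun_pow (m + 1)
  refine ((hexp.fun_mul hu).fun_mul hs).congr_deriv ?_
  simp only [vonMisesIntegrand, neg_neg, Nat.add_sub_cancel]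
  -- `sin² θ = (1 - cos θ) (1 + cos θ)` turns everything into a polynomial in `1 - cos θ`
  rcases a with _ | a
  · push_cast
    linear_combination -exp (κ * cos θ) * sin θ ^ m * κ * sin_sq θ
  · push_cast
    linear_combination exp (κ * cos θ) * sin θ ^ m * (1 - cos θ) ^ a
      * ((a + 1) - κ * (1 - cos θ)) * sin_sq θ

theorem vonMisesMoment_recurrence :
    κ * (2 * vonMisesMoment m (a + 1) κ - vonMisesMoment m (a + 2) κ)
      = (2 * a + m + 1) * vonMisesMoment m a κ - (a + m + 1) * vonMisesMoment m (a + 1) κ := by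
  have hint (b : ℕ) : IntervalIntegrable (vonMisesIntegrand m b κ) volume 0 π :=
    (continuous_vonMisesIntegrand m b κ).intervalIntegrable 0 π
  have hf₀ := (hint a).const_mul (2 * a + m + 1 : ℝ)
  have hf₁ := (hint (a + 1)).const_mul (a + m + 1 + 2 * κ)
  have hf₂ := (hint (a + 2)).const_mul κ
  have hFTC := intervalIntegral.integral_eq_sub_of_hasDerivAt
    (fun θ _ ↦ hasDerivAt_exp_mul_cos_mul_pow_mul_sin_pow m a κ θ) ((hf₀.sub hf₁).add hf₂)
  rw [intervalIntegral.integral_add (hf₀.sub hf₁) hf₂, intervalIntegral.integral_sub hf₀ hf₁]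
    at hFTC
  simp only [intervalIntegral.integral_const_mul, ← vonMisesMoment_eq_intervalIntegral,
    sin_pi, sin_zero, zero_pow (Nat.succ_ne_zero m), mul_zero, sub_zero] at hFTC
  linarith

theorem vonMisesAvg_recurrence :
    κ * (2 * vonMisesAvg m (a + 1) κ - vonMisesAvg m (a + 2) κ)
      = (2 * a + m + 1) * vonMisesAvg m a κ - (a + m + 1) * vonMisesAvg m (a + 1) κ := by
  have := (vonMisesMoment_zero_pos m κ).ne'
  simp only [vonMisesAvg]
  field_simp
  linear_combination vonMisesMoment_recurrence m a κ

theorem orderParam_add_two_s8 : orderParam (m + 2) κ = 1 - vonMisesAvg m 1 κ := by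
  have hden : ∫ θ in Ioo 0 π, exp (κ * cos θ) * sin θ ^ m = vonMisesMoment m 0 κ := by
    simp only [vonMisesMoment, vonMisesIntegrand, pow_zero, one_mul]
  have hnum : ∫ θ in Ioo 0 π, cos θ * exp (κ * cos θ) * sin θ ^ m
      = vonMisesMoment m 0 κ - vonMisesMoment m 1 κ := by
    rw [vonMisesMoment, vonMisesMoment, ← integral_sub (integrableOn_vonMisesIntegrand m 0 κ)
      (integrableOn_vonMisesIntegrand m 1 κ)]
    congr 1 with θ
    simp only [vonMisesIntegrand]
    ring
  rw [orderParam, Nat.add_sub_cancel, hnum, hden, vonMisesAvg, sub_div,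
    div_self (vonMisesMoment_zero_pos m κ).ne']

end Recurrence

section Laplace

variable (m a : ℕ) {κ : ℝ}

theorem vonMisesIntegrand_le {θ : ℝ} (hκ : 0 ≤ κ) (hθ : θ ∈ Ioo 0 π) :
    vonMisesIntegrand m a κ θ
      ≤ exp κ / 2 ^ a * (θ ^ (2 * a + m) * exp (-(2 * κ / π ^ 2) * θ ^ 2)) := by
  have hu : 0 ≤ 1 - cos θ := by linarith [cos_le_one θ]
  have hu' : 1 - cos θ ≤ θ ^ 2 / 2 := by linarith [one_sub_sq_div_two_le_cos (x := θ)]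
  have hcos : cos θ ≤ 1 - 2 / π ^ 2 * θ ^ 2 :=
    cos_le_one_sub_mul_cos_sq (by rw [abs_of_pos hθ.1]; exact hθ.2.le)
  have hs : 0 ≤ sin θ := sin_nonneg_of_nonneg_of_le_pi hθ.1.le hθ.2.le
  calc vonMisesIntegrand m a κ θ
      ≤ (θ ^ 2 / 2) ^ a * exp (κ * (1 - 2 / π ^ 2 * θ ^ 2)) * θ ^ m := by
        unfold vonMisesIntegrand
        gcongr
        exact sin_le hθ.1.le
    _ = _ := by
        rw [show κ * (1 - 2 / π ^ 2 * θ ^ 2) = κ + -(2 * κ / π ^ 2) * θ ^ 2 by ring, exp_add,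
          div_pow, pow_add, pow_mul]
        ring

theorem exists_vonMisesMoment_le :
    ∃ C ≥ 0, ∀ κ > 0,
      vonMisesMoment m a κ ≤ C * (exp κ * κ ^ (-(m + 1) / 2 : ℝ)) / κ ^ a := by
  set k := 2 * a + m
  have hk : (-1 : ℝ) < k := by linarith [k.cast_nonneg (α := ℝ)]
  refine ⟨(2 / π ^ 2) ^ (-(k + 1) / 2 : ℝ) * (1 / 2) * Gamma ((k + 1) / 2) / 2 ^ a,
    by positivity, fun κ hκ ↦ ?_⟩
  set b := 2 * κ / π ^ 2
  have hb : 0 < b := by positivity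
  have hint : IntegrableOn (fun θ ↦ θ ^ k * exp (-b * θ ^ 2)) (Ioi 0) := by
    simpa [rpow_natCast] using integrableOn_rpow_mul_exp_neg_mul_sq hb hk
  have hval : ∫ θ in Ioi 0, θ ^ k * exp (-b * θ ^ 2)
      = b ^ (-(k + 1) / 2 : ℝ) * (1 / 2) * Gamma ((k + 1) / 2) := by
    simpa [rpow_natCast, rpow_two] using integral_rpow_mul_exp_neg_mul_rpow two_pos hk hb
  have hpow : κ ^ (-(k + 1) / 2 : ℝ) = κ ^ (-(m + 1) / 2 : ℝ) / κ ^ a := by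
    rw [← rpow_natCast, ← rpow_sub hκ]
    push_cast [k]
    ring_nf
  calc vonMisesMoment m a κ
      ≤ ∫ θ in Ioo 0 π, exp κ / 2 ^ a * (θ ^ k * exp (-b * θ ^ 2)) :=
        setIntegral_mono_on (integrableOn_vonMisesIntegrand m a κ)
          ((hint.mono_set Ioo_subset_Ioi_self).const_mul _) measurableSet_Ioo
          fun θ hθ ↦ vonMisesIntegrand_le m a hκ.le hθ
    _ ≤ ∫ θ in Ioi 0, exp κ / 2 ^ a * (θ ^ k * exp (-b * θ ^ 2)) :=
        setIntegral_mono_set (hint.const_mul _)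
          ((ae_restrict_iff' measurableSet_Ioi).2 (ae_of_all _ fun θ (hθ : 0 < θ) ↦ by positivity))
          Ioo_subset_Ioi_self.eventuallyLE
    _ = exp κ / 2 ^ a * (b ^ (-(k + 1) / 2 : ℝ) * (1 / 2) * Gamma ((k + 1) / 2)) := by
        rw [integral_const_mul, hval]
    _ = _ := by
        rw [show b = 2 / π ^ 2 * κ by ring, mul_rpow (by positivity) hκ.le, hpow]
        ring

theorem exp_sub_half_mul_le_vonMisesIntegrand_zero {θ : ℝ} (hκ : 1 ≤ κ)
    (hθ : θ ∈ Ioo 0 (κ ^ (-1 / 2 : ℝ))) :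
    exp (κ - 1 / 2) * ((2 / π) ^ m * θ ^ m) ≤ vonMisesIntegrand m 0 κ θ := by
  obtain ⟨hθ0, hθδ⟩ := hθ
  have hδ1 : κ ^ (-1 / 2 : ℝ) ≤ 1 := rpow_le_one_of_one_le_of_nonpos hκ (by norm_num)
  have hκθ : κ * θ ^ 2 ≤ 1 := calc
    κ * θ ^ 2 ≤ κ * (κ ^ (-1 / 2 : ℝ)) ^ 2 := by gcongr
    _ = 1 := by
      rw [← rpow_natCast, ← rpow_mul (by linarith)]
      norm_num [rpow_neg_one, mul_inv_cancel₀ (show κ ≠ 0 by positivity)]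
  have hcos : κ - 1 / 2 ≤ κ * cos θ := by
    nlinarith [one_sub_sq_div_two_le_cos (x := θ)]
  have hsin : 2 / π * θ ≤ sin θ := mul_le_sin hθ0.le (by linarith [pi_gt_three])
  rw [vonMisesIntegrand, pow_zero, one_mul, ← mul_pow]
  gcongr

theorem exists_vonMisesMoment_zero_ge :
    ∃ c > 0, ∀ κ ≥ 1, c * (exp κ * κ ^ (-(m + 1) / 2 : ℝ)) ≤ vonMisesMoment m 0 κ := by
  refine ⟨exp (-1 / 2) * (2 / π) ^ m / (m + 1), by positivity, fun κ hκ ↦ ?_⟩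
  set δ := κ ^ (-1 / 2 : ℝ)
  have hδ : δ ≤ π :=
    (rpow_le_one_of_one_le_of_nonpos hκ (by norm_num)).trans (by linarith [pi_gt_three])
  have hint : IntegrableOn (fun θ : ℝ ↦ exp (κ - 1 / 2) * ((2 / π) ^ m * θ ^ m)) (Ioo 0 δ) :=
    (Continuous.integrableOn_Icc (by fun_prop)).mono_set Ioo_subset_Icc_self
  calc exp (-1 / 2) * (2 / π) ^ m / (m + 1) * (exp κ * κ ^ (-(m + 1) / 2 : ℝ))
      = ∫ θ in Ioo 0 δ, exp (κ - 1 / 2) * ((2 / π) ^ m * θ ^ m) := by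
        rw [← integral_Ioc_eq_integral_Ioo, ← intervalIntegral.integral_of_le (by positivity),
          intervalIntegral.integral_const_mul, intervalIntegral.integral_const_mul, integral_pow,
          show (δ ^ (m + 1) : ℝ) = κ ^ (-(m + 1) / 2 : ℝ) by
            rw [← rpow_natCast, ← rpow_mul (by linarith)]; push_cast; ring_nf,
          show κ - 1 / 2 = -1 / 2 + κ by ring, exp_add, zero_pow (Nat.succ_ne_zero m), sub_zero]
        field_simp
    _ ≤ ∫ θ in Ioo 0 δ, vonMisesIntegrand m 0 κ θ :=
        setIntegral_mono_on hint
          ((integrableOn_vonMisesIntegrand m 0 κ).mono_set (Ioo_subset_Ioo_right hδ))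
          measurableSet_Ioo fun θ hθ ↦ exp_sub_half_mul_le_vonMisesIntegrand_zero m hκ hθ
    _ ≤ vonMisesMoment m 0 κ :=
        setIntegral_mono_set (integrableOn_vonMisesIntegrand m 0 κ)
          ((ae_restrict_iff' measurableSet_Ioo).2 (ae_of_all _ fun θ hθ ↦
            vonMisesIntegrand_nonneg m 0 κ (Ioo_subset_Icc_self hθ)))
          (Ioo_subset_Ioo_right hδ).eventuallyLE

theorem exists_vonMisesAvg_le : ∃ C, ∀ κ ≥ 1, vonMisesAvg m a κ ≤ C / κ ^ a := by
  obtain ⟨C, hC₀, hC⟩ := exists_vonMisesMoment_le m a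
  obtain ⟨c, hc₀, hc⟩ := exists_vonMisesMoment_zero_ge m
  refine ⟨C / c, fun κ hκ ↦ ?_⟩
  have hκ₀ : 0 < κ := by linarith
  rw [vonMisesAvg, div_le_iff₀ (vonMisesMoment_zero_pos m κ)]
  calc vonMisesMoment m a κ ≤ C * (exp κ * κ ^ (-(m + 1) / 2 : ℝ)) / κ ^ a := hC κ hκ₀
    _ = C / c / κ ^ a * (c * (exp κ * κ ^ (-(m + 1) / 2 : ℝ))) := by field_simp
    _ ≤ C / c / κ ^ a * vonMisesMoment m 0 κ := by gcongr; exact hc κ hκ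

end Laplace

theorem abs_expansion_error_le {N κ x y z C : ℝ} (hN : 0 ≤ N) (hκ : 1 ≤ κ) (hz : 0 ≤ z)
    (hzC : z ≤ C / κ ^ 3) (h₀ : κ * (2 * x - y) = N * (1 - x))
    (h₁ : κ * (2 * y - z) = (N + 2) * x - (N + 1) * y) :
    |-x + N / (2 * κ) - N * (N - 2) / (8 * κ ^ 2)|
      ≤ (8 * C + N ^ 2 * (N + 10) + N ^ 2 * (N + 1) * (N + 2)) / 32 / κ ^ 3 := by
  have hκ0 : 0 < κ := by linarith
  set Q := 4 * κ ^ 2 + 3 * N * κ + N * (N + 1)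
  -- eliminate `y` between the two relations
  have hx : x * Q = κ ^ 2 * z + N * (2 * κ + N + 1) := by
    linear_combination (2 * κ + N + 1) * h₀ + κ * h₁
  have hE : (-x + N / (2 * κ) - N * (N - 2) / (8 * κ ^ 2)) * (8 * κ ^ 2)
      = -8 * κ ^ 2 * x + 4 * N * κ - N * (N - 2) := by
    field_simp
    ring
  have hEQ : (-x + N / (2 * κ) - N * (N - 2) / (8 * κ ^ 2)) * (8 * κ ^ 2 * Q)
      = N ^ 2 * (N + 10) * κ - (N - 2) * N ^ 2 * (N + 1) - 8 * κ ^ 4 * z := by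
    linear_combination Q * hE - 8 * κ ^ 2 * hx
  have hQ : 32 * κ ^ 4 ≤ 8 * κ ^ 2 * Q := by
    have : 0 ≤ 8 * κ ^ 2 * (3 * N * κ + N * (N + 1)) := by positivity
    linarith
  have hzκ : 8 * κ ^ 4 * z ≤ 8 * C * κ := calc
    8 * κ ^ 4 * z ≤ 8 * κ ^ 4 * (C / κ ^ 3) := by gcongr
    _ = 8 * C * κ := by field_simp
  have hnum : |N ^ 2 * (N + 10) * κ - (N - 2) * N ^ 2 * (N + 1) - 8 * κ ^ 4 * z|
      ≤ (8 * C + N ^ 2 * (N + 10) + N ^ 2 * (N + 1) * (N + 2)) * κ := by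
    have : 0 ≤ 8 * κ ^ 4 * z := by positivity
    have : 0 ≤ N ^ 2 * (N + 1) := by positivity
    have : 0 ≤ N ^ 2 * (N + 10) * κ := by positivity
    have : (N + 2) * (N ^ 2 * (N + 1)) ≤ (N + 2) * (N ^ 2 * (N + 1)) * κ :=
      le_mul_of_one_le_right (by positivity) hκ
    rw [abs_le]
    constructor <;> nlinarith
  have key : |-x + N / (2 * κ) - N * (N - 2) / (8 * κ ^ 2)| * 32 * κ ^ 3 * κ
      ≤ (8 * C + N ^ 2 * (N + 10) + N ^ 2 * (N + 1) * (N + 2)) * κ := calc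
    _ = |-x + N / (2 * κ) - N * (N - 2) / (8 * κ ^ 2)| * (32 * κ ^ 4) := by ring
    _ ≤ |-x + N / (2 * κ) - N * (N - 2) / (8 * κ ^ 2)| * (8 * κ ^ 2 * Q) := by gcongr
    _ = |N ^ 2 * (N + 10) * κ - (N - 2) * N ^ 2 * (N + 1) - 8 * κ ^ 4 * z| := by
      rw [← hEQ, abs_mul, abs_of_nonneg (by positivity : 0 ≤ 8 * κ ^ 2 * Q)]
    _ ≤ _ := hnum
  rw [div_div, le_div_iff₀ (by positivity)]
  linarith [le_of_mul_le_mul_right key hκ0]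

/-- Expansion of `c₁` as `κ → ∞`:
`c₁(κ) = 1 − (n−1)/(2κ) + (n−1)(n−3)/(8κ²) + O(κ⁻³)`. -/
theorem orderParam_expansion_infty (n : ℕ) (hn : 2 ≤ n) :
    (fun κ : ℝ => orderParam n κ - 1 + ((n : ℝ) - 1) / (2 * κ)
        - ((n : ℝ) - 1) * ((n : ℝ) - 3) / (8 * κ ^ 2))
      =O[atTop] fun κ : ℝ => (κ ^ 3)⁻¹ := by
  obtain ⟨m, rfl⟩ := Nat.exists_eq_add_of_le' hn
  obtain ⟨C, hC⟩ := exists_vonMisesAvg_le m 3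
  set N : ℝ := m + 1
  refine isBigO_iff.2 ⟨(8 * C + N ^ 2 * (N + 10) + N ^ 2 * (N + 1) * (N + 2)) / 32, ?_⟩
  filter_upwards [eventually_ge_atTop 1] with κ hκ
  have h₀ := vonMisesAvg_recurrence m 0 κ
  have h₁ := vonMisesAvg_recurrence m 1 κ
  rw [vonMisesAvg_zero] at h₀
  have := abs_expansion_error_le (N := N) (x := vonMisesAvg m 1 κ)
    (y := vonMisesAvg m 2 κ) (by positivity) hκ (vonMisesAvg_nonneg m 3 κ)
    (hC κ hκ) (by linear_combination h₀) (by linear_combination h₁)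
  rw [orderParam_add_two_s8, Real.norm_eq_abs, Real.norm_of_nonneg (by positivity), ← div_eq_mul_inv]
  convert this using 2
  push_cast
  ring
end

section
/- Let n ≥ 2 be an integer. Then, as κ → +∞, ∫_0^π e^{κ cos θ} (sin θ)^{n−2} dθ − 2^{(n−3)/2} e^{κ} κ^{−(n−1)/2} ( Γ((n−1)/2) − ((n−3)/4) Γ((n+1)/2) κ^{−1} ) = O( e^{κ} κ^{−(n−1)/2 − 2} ). -/
/-!
The substitution `t = 1 - cos θ` turns the integral into `e^κ ∫₀² e^{-κt} (t (2 - t))^a dt` with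
`a = (n - 3) / 2`. Near `t = 0` the kernel is `t^a (2^a - a 2^{a-1} t) + O(t^{a+2})`, and the
Laplace transform over `(0, ∞)` of the two leading terms is exactly the stated main term (two
Gamma integrals). By Watson's lemma the remainder, being `O(t^{a+2})` at `0` and
`e^{-t}`-integrable, contributes `O(κ^{-(a+3)})`.
-/

open MeasureTheory Real Filter Asymptotics Set Topology

lemma integrableOn_rpow_mul_exp_neg_mul {s r : ℝ} (hs : -1 < s) (hr : 0 < r) :
    IntegrableOn (fun t => t ^ s * exp (-(r * t))) (Ioi 0) := by
  simpa using integrableOn_rpow_mul_exp_neg_mul_rpow hs one_pos hr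

lemma integral_rpow_mul_exp_neg_mul {s r : ℝ} (hs : -1 < s) (hr : 0 < r) :
    ∫ t in Ioi 0, t ^ s * exp (-(r * t)) = Gamma (s + 1) * r ^ (-(s + 1)) := by
  have h := integral_rpow_mul_exp_neg_mul_Ioi (a := s + 1) (by linarith) hr
  rw [add_sub_cancel_right] at h
  rw [h, mul_comm, one_div, inv_rpow hr.le, rpow_neg hr.le]

lemma exp_neg_mul_eq_mul_exp_neg (κ t : ℝ) :
    exp (-(κ * t)) = exp (-((κ - 1) * t)) * exp (-t) := by
  rw [← exp_add]; ring_nf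

section Laplace

variable {g : ℝ → ℝ} {b κ δ : ℝ}

lemma norm_setIntegral_Ioo_exp_neg_mul_le {C : ℝ} (hb : -1 < b) (hC : 0 ≤ C) (hκ : 0 < κ)
    (hg : ∀ t ∈ Ioo 0 δ, ‖g t‖ ≤ C * t ^ b) :
    ‖∫ t in Ioo 0 δ, exp (-(κ * t)) * g t‖ ≤ C * Gamma (b + 1) * κ ^ (-(b + 1)) := by
  have hmaj : IntegrableOn (fun t => C * (t ^ b * exp (-(κ * t)))) (Ioi 0) :=
    (integrableOn_rpow_mul_exp_neg_mul hb hκ).const_mul C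
  calc ‖∫ t in Ioo 0 δ, exp (-(κ * t)) * g t‖
      ≤ ∫ t in Ioo 0 δ, C * (t ^ b * exp (-(κ * t))) := by
        refine norm_integral_le_of_norm_le (hmaj.mono_set Ioo_subset_Ioi_self) ?_
        filter_upwards [ae_restrict_mem measurableSet_Ioo] with t ht
        rw [norm_mul, norm_of_nonneg (exp_pos _).le]
        calc exp (-(κ * t)) * ‖g t‖ ≤ exp (-(κ * t)) * (C * t ^ b) := by gcongr; exact hg t ht
          _ = C * (t ^ b * exp (-(κ * t))) := by ring
    _ ≤ ∫ t in Ioi 0, C * (t ^ b * exp (-(κ * t))) := by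
        refine setIntegral_mono_set hmaj ?_ Ioo_subset_Ioi_self.eventuallyLE
        filter_upwards [ae_restrict_mem measurableSet_Ioi] with t ht
        have : 0 ≤ t ^ b := rpow_nonneg (le_of_lt ht) b
        positivity
    _ = C * Gamma (b + 1) * κ ^ (-(b + 1)) := by
        rw [integral_const_mul, integral_rpow_mul_exp_neg_mul hb hκ, mul_assoc]

lemma norm_setIntegral_Ici_exp_neg_mul_le (hδ : 0 < δ) (hκ : 1 ≤ κ)
    (hg : IntegrableOn (fun t => exp (-t) * g t) (Ioi 0)) :
    ‖∫ t in Ici δ, exp (-(κ * t)) * g t‖ ≤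
      exp (-((κ - 1) * δ)) * ∫ t in Ioi 0, ‖exp (-t) * g t‖ := by
  have hsub : Ici δ ⊆ Ioi 0 := Ici_subset_Ioi.2 hδ
  calc ‖∫ t in Ici δ, exp (-(κ * t)) * g t‖
      ≤ ∫ t in Ici δ, exp (-((κ - 1) * δ)) * ‖exp (-t) * g t‖ := by
        refine norm_integral_le_of_norm_le ((IntegrableOn.mono_set hg.norm hsub).const_mul _) ?_
        filter_upwards [ae_restrict_mem measurableSet_Ici] with t ht
        rw [exp_neg_mul_eq_mul_exp_neg, mul_assoc, norm_mul, norm_of_nonneg (exp_pos _).le]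
        gcongr
        nlinarith [mem_Ici.1 ht]
    _ = exp (-((κ - 1) * δ)) * ∫ t in Ici δ, ‖exp (-t) * g t‖ := integral_const_mul _ _
    _ ≤ exp (-((κ - 1) * δ)) * ∫ t in Ioi 0, ‖exp (-t) * g t‖ :=
        mul_le_mul_of_nonneg_left (setIntegral_mono_set hg.norm
          (Eventually.of_forall fun t => norm_nonneg _) hsub.eventuallyLE) (exp_pos _).le

lemma IntegrableOn.exp_neg_mul_of_one_le (hκ : 1 ≤ κ)
    (hg : IntegrableOn (fun t => exp (-t) * g t) (Ioi 0)) :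
    IntegrableOn (fun t => exp (-(κ * t)) * g t) (Ioi 0) := by
  have hmeas : Continuous fun t => exp (-((κ - 1) * t)) := by fun_prop
  refine IntegrableOn.congr_fun (Integrable.bdd_mul (c := 1) hg hmeas.aestronglyMeasurable ?_)
    (fun t _ => by rw [exp_neg_mul_eq_mul_exp_neg κ t, mul_assoc]) measurableSet_Ioi
  filter_upwards [ae_restrict_mem measurableSet_Ioi] with t ht
  rw [norm_of_nonneg (exp_pos _).le, exp_le_one_iff]
  nlinarith [mem_Ioi.1 ht]

theorem integral_exp_neg_mul_isBigO_rpow (hb : -1 < b) (hg0 : g =O[𝓝[>] 0] fun t => t ^ b)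
    (hg : IntegrableOn (fun t => exp (-t) * g t) (Ioi 0)) :
    (fun κ => ∫ t in Ioi 0, exp (-(κ * t)) * g t) =O[atTop] fun κ => κ ^ (-(b + 1)) := by
  obtain ⟨C, hC, hCg⟩ := hg0.exists_pos
  obtain ⟨δ, hδ, hδg⟩ := mem_nhdsGT_iff_exists_Ioo_subset.1 hCg.bound
  have hnear : ∀ t ∈ Ioo 0 δ, ‖g t‖ ≤ C * t ^ b := fun t ht => by
    simpa [abs_of_nonneg (rpow_nonneg ht.1.le b)] using hδg ht
  set K := ∫ t in Ioi 0, ‖exp (-t) * g t‖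
  have hdisj : Disjoint (Ioo 0 δ) (Ici δ) := disjoint_left.2 fun t ht ht' => not_le.2 ht.2 ht'
  have hbound : ∀ κ ≥ 1, ‖∫ t in Ioi 0, exp (-(κ * t)) * g t‖ ≤
      C * Gamma (b + 1) * κ ^ (-(b + 1)) + K * exp δ * exp (-δ * κ) := by
    intro κ hκ
    have hint := IntegrableOn.exp_neg_mul_of_one_le hκ hg
    rw [← Ioo_union_Ici_eq_Ioi hδ, setIntegral_union hdisj measurableSet_Ici
      (hint.mono_set Ioo_subset_Ioi_self) (hint.mono_set (Ici_subset_Ioi.2 hδ))]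
    refine (norm_add_le _ _).trans (add_le_add
      (norm_setIntegral_Ioo_exp_neg_mul_le hb hC.le (by linarith) hnear) ?_)
    refine (norm_setIntegral_Ici_exp_neg_mul_le hδ hκ hg).trans (le_of_eq ?_)
    rw [show -((κ - 1) * δ) = δ + -δ * κ by ring, exp_add]
    ring
  have hmajorant : (fun κ => C * Gamma (b + 1) * κ ^ (-(b + 1)) + K * exp δ * exp (-δ * κ))
      =O[atTop] fun κ => κ ^ (-(b + 1)) :=
    ((isBigO_refl _ _).const_mul_left _).add
      ((isLittleO_exp_neg_mul_rpow_atTop hδ _).isBigO.const_mul_left _)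
  refine (IsBigO.of_bound 1 ?_).trans hmajorant
  filter_upwards [eventually_ge_atTop 1] with κ hκ
  rw [one_mul]
  exact (hbound κ hκ).trans (le_norm_self _)

end Laplace

lemma sub_rpow_sub_linear_isBigO {c a : ℝ} (hc : 0 < c) :
    (fun t => (c - t) ^ a - (c ^ a - a * c ^ (a - 1) * t)) =O[𝓝[≥] 0] fun t => t ^ 2 := by
  set f : ℝ → ℝ := fun t => (c - t) ^ a
  have hpos : ∀ t ∈ Icc 0 (c / 2), c - t ≠ 0 := fun t ht => by linarith [ht.2]
  have hf : ContDiffOn ℝ (1 + 1) f (Icc 0 (c / 2)) :=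
    (contDiffOn_const.sub contDiffOn_id).rpow_const_of_ne hpos
  have hderiv : HasDerivAt f (-(a * c ^ (a - 1))) 0 := by
    simpa using ((hasDerivAt_id (0 : ℝ)).const_sub c).rpow_const (p := a)
      (Or.inl (by simpa using hc.ne'))
  obtain ⟨C, hC⟩ := exists_taylor_mean_remainder_bound (n := 1) (half_pos hc).le hf
  have htaylor : ∀ t, taylorWithinEval f 1 (Icc 0 (c / 2)) 0 t = c ^ a - a * c ^ (a - 1) * t := by
    intro t
    rw [taylorWithinEval_succ, taylor_within_zero_eval, iteratedDerivWithin_one,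
      hderiv.hasDerivWithinAt.derivWithin
        (uniqueDiffOn_Icc (half_pos hc) 0 (left_mem_Icc.2 (half_pos hc).le))]
    simp only [f, sub_zero, CharP.cast_eq_zero, zero_add, Nat.factorial_zero, Nat.cast_one,
      mul_one, inv_one, pow_one, one_mul, smul_eq_mul, mul_neg]
    ring
  refine IsBigO.of_bound C ?_
  filter_upwards [Icc_mem_nhdsGE (half_pos hc)] with t ht
  have h := hC t ht
  rw [htaylor] at h
  simpa [f] using h

lemma integrableOn_mul_two_sub_rpow {a : ℝ} (ha : -1 < a) :
    IntegrableOn (fun t : ℝ => (t * (2 - t)) ^ a) (Ioo 0 2) := by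
  have hleft : IntegrableOn (fun t : ℝ => t ^ a) (Icc 0 1) :=
    (intervalIntegrable_iff_integrableOn_Icc_of_le zero_le_one).1
      (intervalIntegral.intervalIntegrable_rpow' ha)
  have hright : IntegrableOn (fun t : ℝ => (2 - t) ^ a) (Icc 1 2) := by
    have h := (intervalIntegral.intervalIntegrable_rpow' (a := 0) (b := 1) ha).comp_sub_left 2
    rw [sub_zero, show (2 : ℝ) - 1 = 1 by norm_num] at h
    exact (intervalIntegrable_iff_integrableOn_Icc_of_le one_le_two).1 h.symm
  have hprod : IntegrableOn (fun t : ℝ => t ^ a * (2 - t) ^ a) (Icc 0 2) := by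
    rw [← Icc_union_Icc_eq_Icc zero_le_one one_le_two]
    refine (hleft.mul_continuousOn ?_ isCompact_Icc).union
      (hright.continuousOn_mul ?_ isCompact_Icc)
    · exact (continuousOn_const.sub continuousOn_id).rpow_const fun t ht =>
        Or.inl (show (2 : ℝ) - t ≠ 0 by linarith [ht.2])
    · exact continuousOn_id.rpow_const fun t ht => Or.inl (show t ≠ 0 by linarith [ht.1])
  refine (hprod.mono_set Ioo_subset_Icc_self).congr_fun (fun t ht => ?_) measurableSet_Ioo
  rw [mul_rpow ht.1.le (by linarith [ht.2])]

lemma integrableOn_exp_neg_mul_mul_two_sub_rpow {a : ℝ} (ha : -1 < a) (κ : ℝ) :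
    IntegrableOn (fun t => exp (-(κ * t)) * (t * (2 - t)) ^ a) (Ioo 0 2) :=
  (integrableOn_mul_two_sub_rpow ha).continuousOn_mul_of_subset (by fun_prop) isCompact_Icc
    measurableSet_Ioo Ioo_subset_Icc_self

/-- The indicator keeps `(t * (2 - t)) ^ a` away from the junk values of `rpow` at negative
bases. -/
noncomputable def kernelRemainder (a t : ℝ) : ℝ :=
  (Ioo 0 2).indicator (fun t => (t * (2 - t)) ^ a) t - t ^ a * (2 ^ a - a * 2 ^ (a - 1) * t)

lemma kernelRemainder_isBigO (a : ℝ) :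
    kernelRemainder a =O[𝓝[>] 0] fun t => t ^ (a + 2) := by
  have h := (isBigO_refl (fun t : ℝ => t ^ a) (𝓝[>] 0)).mul
    ((sub_rpow_sub_linear_isBigO (a := a) two_pos).mono (nhdsWithin_mono _ Ioi_subset_Ici_self))
  refine h.congr' ?_ ?_
  · filter_upwards [Ioo_mem_nhdsGT two_pos] with t ht
    rw [kernelRemainder, indicator_of_mem ht, mul_rpow ht.1.le (by linarith [ht.2])]
    ring
  · filter_upwards [self_mem_nhdsWithin] with t (ht : 0 < t)
    rw [rpow_add ht, rpow_two]

lemma integrableOn_exp_neg_mul_mul_rpow_linear {a κ : ℝ} (ha : -1 < a) (hκ : 0 < κ) :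
    IntegrableOn (fun t => exp (-(κ * t)) * (t ^ a * (2 ^ a - a * 2 ^ (a - 1) * t))) (Ioi 0) := by
  refine IntegrableOn.congr_fun
    (((integrableOn_rpow_mul_exp_neg_mul ha hκ).const_mul (2 ^ a)).sub
      ((integrableOn_rpow_mul_exp_neg_mul (by linarith : -1 < a + 1) hκ).const_mul
        (a * 2 ^ (a - 1)))) (fun t ht => ?_) measurableSet_Ioi
  simp only [Pi.sub_apply, rpow_add_one (ne_of_gt ht)]
  ring

lemma integral_exp_neg_mul_mul_rpow_linear {a κ : ℝ} (ha : -1 < a) (hκ : 0 < κ) :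
    ∫ t in Ioi 0, exp (-(κ * t)) * (t ^ a * (2 ^ a - a * 2 ^ (a - 1) * t)) =
      2 ^ a * κ ^ (-(a + 1)) * (Gamma (a + 1) - a / 2 * Gamma (a + 2) * κ⁻¹) := by
  have ha' : -1 < a + 1 := by linarith
  rw [setIntegral_congr_fun measurableSet_Ioi (g := fun t =>
      2 ^ a * (t ^ a * exp (-(κ * t))) - a * 2 ^ (a - 1) * (t ^ (a + 1) * exp (-(κ * t))))
      fun t ht => by simp only [rpow_add_one (ne_of_gt ht)]; ring,
    integral_sub ((integrableOn_rpow_mul_exp_neg_mul ha hκ).const_mul _)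
      ((integrableOn_rpow_mul_exp_neg_mul ha' hκ).const_mul _),
    integral_const_mul, integral_const_mul, integral_rpow_mul_exp_neg_mul ha hκ,
    integral_rpow_mul_exp_neg_mul ha' hκ, rpow_sub_one two_ne_zero,
    show -(a + 1 + 1) = -(a + 1) + -1 by ring, rpow_add hκ, rpow_neg_one, add_assoc,
    one_add_one_eq_two]
  ring

lemma exp_neg_mul_mul_kernelRemainder (a κ t : ℝ) :
    exp (-(κ * t)) * kernelRemainder a t =
      (Ioo 0 2).indicator (fun t => exp (-(κ * t)) * (t * (2 - t)) ^ a) t -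
        exp (-(κ * t)) * (t ^ a * (2 ^ a - a * 2 ^ (a - 1) * t)) := by
  simp only [kernelRemainder, mul_sub, indicator_mul_right]

lemma integrableOn_exp_neg_mul_kernelRemainder {a κ : ℝ} (ha : -1 < a) (hκ : 0 < κ) :
    IntegrableOn (fun t => exp (-(κ * t)) * kernelRemainder a t) (Ioi 0) := by
  have hk := integrableOn_exp_neg_mul_mul_two_sub_rpow ha κ
  simp_rw [exp_neg_mul_mul_kernelRemainder]
  exact (hk.integrable_indicator measurableSet_Ioo).integrableOn.sub
    (integrableOn_exp_neg_mul_mul_rpow_linear ha hκ)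

lemma integral_exp_neg_mul_kernelRemainder {a κ : ℝ} (ha : -1 < a) (hκ : 0 < κ) :
    ∫ t in Ioi 0, exp (-(κ * t)) * kernelRemainder a t =
      (∫ t in Ioo 0 2, exp (-(κ * t)) * (t * (2 - t)) ^ a) -
        2 ^ a * κ ^ (-(a + 1)) * (Gamma (a + 1) - a / 2 * Gamma (a + 2) * κ⁻¹) := by
  have hk := integrableOn_exp_neg_mul_mul_two_sub_rpow ha κ
  simp_rw [exp_neg_mul_mul_kernelRemainder]
  rw [integral_sub
    (hk.integrable_indicator measurableSet_Ioo).integrableOn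
    (integrableOn_exp_neg_mul_mul_rpow_linear ha hκ), setIntegral_indicator measurableSet_Ioo,
    inter_eq_right.2 Ioo_subset_Ioi_self, integral_exp_neg_mul_mul_rpow_linear ha hκ]

lemma image_one_sub_cos_Ioo : (fun θ => 1 - cos θ) '' Ioo 0 π = Ioo 0 2 := by
  have hcos : cos '' Ioo 0 π = Ioo (-1) 1 := by
    simpa using cosPartialHomeomorph.image_source_eq_target
  rw [← image_image (fun x => 1 - x) cos, hcos, image_const_sub_Ioo]
  norm_num

lemma integral_Ioo_zero_two_eq_integral_sin_mul (g : ℝ → ℝ) :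
    ∫ t in Ioo 0 2, g t = ∫ θ in Ioo 0 π, sin θ * g (1 - cos θ) := by
  have hderiv : ∀ θ ∈ Ioo 0 π, HasDerivWithinAt (fun θ => 1 - cos θ) (sin θ) (Ioo 0 π) θ :=
    fun θ _ => by simpa using ((hasDerivAt_cos θ).const_sub 1).hasDerivWithinAt
  have hinj : InjOn (fun θ => 1 - cos θ) (Ioo 0 π) := fun x hx y hy h =>
    injOn_cos (Ioo_subset_Icc_self hx) (Ioo_subset_Icc_self hy) (by simpa using h)
  rw [← image_one_sub_cos_Ioo, integral_image_eq_integral_abs_deriv_smul measurableSet_Ioo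
    hderiv hinj]
  refine setIntegral_congr_fun measurableSet_Ioo fun θ hθ => ?_
  rw [smul_eq_mul, abs_of_pos (sin_pos_of_pos_of_lt_pi hθ.1 hθ.2)]

lemma mul_rpow_sq_eq_pow_sub_two {x : ℝ} (hx : 0 < x) {n : ℕ} (hn : 2 ≤ n) :
    x * (x ^ 2) ^ (((n : ℝ) - 3) / 2) = x ^ (n - 2) := by
  rw [← rpow_natCast x 2, ← rpow_natCast x (n - 2), ← rpow_mul hx.le, Nat.cast_sub hn,
    show ((n : ℝ) - (2 : ℕ)) = 1 + ((2 : ℕ) : ℝ) * (((n : ℝ) - 3) / 2) by push_cast; ring,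
    rpow_add hx, rpow_one]

lemma integral_exp_mul_cos_mul_sin_pow {n : ℕ} (hn : 2 ≤ n) (κ : ℝ) :
    ∫ θ in Ioo 0 π, exp (κ * cos θ) * sin θ ^ (n - 2) =
      exp κ * ∫ t in Ioo 0 2, exp (-(κ * t)) * (t * (2 - t)) ^ (((n : ℝ) - 3) / 2) := by
  rw [integral_Ioo_zero_two_eq_integral_sin_mul, ← integral_const_mul]
  refine setIntegral_congr_fun measurableSet_Ioo fun θ hθ => ?_
  have hsin := sin_pos_of_pos_of_lt_pi hθ.1 hθ.2
  rw [show (1 - cos θ) * (2 - (1 - cos θ)) = sin θ ^ 2 by rw [sin_sq]; ring,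
    ← mul_rpow_sq_eq_pow_sub_two hsin hn,
    show κ * cos θ = κ + -(κ * (1 - cos θ)) by ring, exp_add]
  ring

/-- Laplace-type expansion of the normalization integral
`∫_0^π e^{κ cos θ} sin^{n−2}θ dθ` as `κ → ∞`. -/
theorem normalization_integral_expansion (n : ℕ) (hn : 2 ≤ n) :
    (fun κ : ℝ =>
        (∫ θ in Set.Ioo 0 π, Real.exp (κ * Real.cos θ) * Real.sin θ ^ (n - 2)) -
          (2 : ℝ) ^ (((n : ℝ) - 3) / 2) * Real.exp κ * κ ^ (-(((n : ℝ) - 1) / 2)) *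
            (Real.Gamma (((n : ℝ) - 1) / 2) -
              (((n : ℝ) - 3) / 4) * Real.Gamma (((n : ℝ) + 1) / 2) * κ⁻¹))
      =O[atTop] fun κ : ℝ => Real.exp κ * κ ^ (-(((n : ℝ) - 1) / 2) - 2) := by
  set a : ℝ := ((n : ℝ) - 3) / 2 with ha_def
  have ha : -1 < a := by
    have : (2 : ℝ) ≤ n := by exact_mod_cast hn
    linarith
  have hlaplace := integral_exp_neg_mul_isBigO_rpow (by linarith) (kernelRemainder_isBigO a)
    (by simpa using integrableOn_exp_neg_mul_kernelRemainder ha one_pos)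
  refine ((isBigO_refl exp atTop).mul hlaplace).congr' ?_ ?_
  · filter_upwards [eventually_gt_atTop 0] with κ hκ
    rw [integral_exp_mul_cos_mul_sin_pow hn, integral_exp_neg_mul_kernelRemainder ha hκ,
      show ((n : ℝ) - 1) / 2 = a + 1 by ring, show ((n : ℝ) + 1) / 2 = a + 2 by ring,
      show ((n : ℝ) - 3) / 4 = a / 2 by ring]
    ring
  · refine Eventually.of_forall fun κ => ?_
    rw [show -(a + 2 + 1) = -(((n : ℝ) - 1) / 2) - 2 by ring]
end

section
/- Let n ≥ 2 be an integer and define the linear operator L on real polynomials by L(P) = −(1−X²)P'' + (n+1)X P' + (n−1)P. Then for every real polynomial Q there exists a unique real polynomial P such that L(P) = Q; moreover this P satisfies deg P ≤ deg Q. In particular, for every natural number p, L restricts to a linear bijection of the space of real polynomials of degree at most p onto itself. -/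
open Polynomial

lemma coeff_Lop (n : ℕ) (P : Polynomial ℝ) (m : ℕ) :
    (Lop n P).coeff m = ((m : ℝ) + 1) * ((m : ℝ) + n - 1) * P.coeff m
      - ((m : ℝ) + 1) * ((m : ℝ) + 2) * P.coeff (m + 2) := by
  have h2 : ((1 : ℝ[X]) - X ^ 2) * derivative (derivative P)
      = derivative (derivative P) - derivative (derivative P) * X ^ 2 := by ring
  have h3 : C ((n : ℝ) + 1) * X * derivative P = C ((n : ℝ) + 1) * (X * derivative P) := by ring
  rw [Lop, h2, h3]
  match m with
  | 0 =>
    simp only [coeff_add, coeff_sub, coeff_neg, coeff_C_mul, coeff_X_mul, coeff_derivative,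
      coeff_mul_X_pow']
    norm_num; ring
  | 1 =>
    simp only [coeff_add, coeff_sub, coeff_neg, coeff_C_mul, coeff_X_mul, coeff_derivative,
      coeff_mul_X_pow']
    norm_num; ring
  | (m + 2) =>
    simp only [coeff_add, coeff_sub, coeff_neg, coeff_C_mul, coeff_X_mul, coeff_derivative,
      coeff_mul_X_pow']
    norm_num; ring

/-- `Lop` as a linear map. -/
noncomputable def LopLin (n : ℕ) : Polynomial ℝ →ₗ[ℝ] Polynomial ℝ where
  toFun := Lop n
  map_add' P Q := by simp only [Lop, derivative_add]; ring
  map_smul' c P := by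
    simp only [Lop, derivative_smul, RingHom.id_apply, smul_eq_C_mul, derivative_C_mul]; ring

lemma degree_Lop_le (n : ℕ) (P : Polynomial ℝ) : (Lop n P).degree ≤ P.degree := by
  rw [degree_le_iff_coeff_zero]
  intro m hm
  rw [coeff_Lop, coeff_eq_zero_of_degree_lt hm,
    coeff_eq_zero_of_degree_lt (hm.trans_le (by exact_mod_cast Nat.le_add_right m 2))]
  ring

lemma le_degree_Lop (n : ℕ) (hn : 2 ≤ n) (P : Polynomial ℝ) :
    P.degree ≤ (Lop n P).degree := by
  rcases eq_or_ne P 0 with rfl | hP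
  · simp
  · rw [degree_eq_natDegree hP]
    apply le_degree_of_ne_zero
    rw [coeff_Lop, coeff_eq_zero_of_natDegree_lt (Nat.lt_add_of_pos_right (by norm_num))]
    have h1 : (0 : ℝ) < (P.natDegree : ℝ) + 1 := by positivity
    have h2 : (0 : ℝ) < (P.natDegree : ℝ) + n - 1 := by
      have : (2 : ℝ) ≤ n := by exact_mod_cast hn
      linarith [Nat.cast_nonneg (α := ℝ) P.natDegree]
    have h3 : P.coeff P.natDegree ≠ 0 := by
      rw [← leadingCoeff]; exact mt leadingCoeff_eq_zero.mp hP
    simpa using mul_ne_zero (mul_ne_zero h1.ne' h2.ne') h3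

lemma Lop_inj (n : ℕ) (hn : 2 ≤ n) : Function.Injective (Lop n) := by
  intro P Q h
  have h0 : Lop n (P - Q) = 0 := by
    have := (LopLin n).map_sub P Q
    simp only [LopLin, LinearMap.coe_mk, AddHom.coe_mk] at this
    rw [this, h, sub_self]
  have := le_degree_Lop n hn (P - Q)
  rw [h0, degree_zero, le_bot_iff, degree_eq_bot, sub_eq_zero] at this
  exact this

lemma Lop_surj_deg_le (n : ℕ) (hn : 2 ≤ n) (p : ℕ) (Q : Polynomial ℝ) (hQ : Q.degree ≤ p) :
    ∃ P : Polynomial ℝ, P.degree ≤ p ∧ Lop n P = Q := by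
  haveI : FiniteDimensional ℝ (degreeLT ℝ (p + 1)) :=
    Module.Finite.equiv (degreeLTEquiv ℝ (p + 1)).symm
  have hmap : ∀ P ∈ degreeLT ℝ (p + 1), LopLin n P ∈ degreeLT ℝ (p + 1) := fun P hP =>
    mem_degreeLT.2 ((degree_Lop_le n P).trans_lt (mem_degreeLT.1 hP))
  set f := (LopLin n).restrict hmap with hf
  have hinj : Function.Injective f := by
    intro x y hxy
    exact Subtype.ext (Lop_inj n hn (congrArg Subtype.val hxy))
  have hsurj : Function.Surjective f := (LinearMap.injective_iff_surjective).mp hinj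
  have hQmem : Q ∈ degreeLT ℝ (p + 1) := mem_degreeLT.2 (by
    refine hQ.trans_lt ?_
    exact_mod_cast Nat.lt_succ_self p)
  obtain ⟨⟨P, hPmem⟩, hPQ⟩ := hsurj ⟨Q, hQmem⟩
  refine ⟨P, ?_, congrArg Subtype.val hPQ⟩
  have := mem_degreeLT.1 hPmem
  rcases eq_or_ne P 0 with rfl | hP0
  · simp
  · rw [degree_eq_natDegree hP0] at this ⊢
    exact_mod_cast Nat.lt_succ_iff.mp (by exact_mod_cast this)

/-- For `n ≥ 2`, for every polynomial `Q` there is a unique polynomial `P` with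
`L(P) = Q`; moreover `deg P ≤ deg Q` (since `deg P ≤ deg L(P)` always holds), and
`L` restricts to a bijection on polynomials of degree at most `p`, for each `p`. -/
theorem Lop_bijective (n : ℕ) (hn : 2 ≤ n) :
    (∀ Q : Polynomial ℝ, ∃! P : Polynomial ℝ, Lop n P = Q) ∧
    (∀ P : Polynomial ℝ, P.degree ≤ (Lop n P).degree) ∧
    (∀ p : ℕ, Set.BijOn (Lop n) {P : Polynomial ℝ | P.degree ≤ p}
      {P : Polynomial ℝ | P.degree ≤ p}) := by
  refine ⟨fun Q => ?_, le_degree_Lop n hn, fun p => ⟨fun P hP => ?_, (Lop_inj n hn).injOn, ?_⟩⟩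
  · obtain ⟨P, -, hPQ⟩ := Lop_surj_deg_le n hn Q.natDegree Q degree_le_natDegree
    exact ⟨P, hPQ, fun R hR => Lop_inj n hn (hR.trans hPQ.symm)⟩
  · exact (degree_Lop_le n P).trans hP
  · intro Q hQ
    obtain ⟨P, hPdeg, hPQ⟩ := Lop_surj_deg_le n hn p Q hQ
    exact ⟨P, hPdeg, hPQ⟩
end

section
/- Define the linear operator D on real polynomials by D(P) = −(1−X²)P' + X P. Then for every real polynomial Q and every natural number N, there exists a unique real polynomial P with deg P ≤ N such that (X−1)^{N+1} divides Q − D(P). -/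
/-!
Expanding at `X = 1`, the operator `D` is triangular in the basis `(X - 1) ^ k`:
`D ((X - 1) ^ k * U) ≡ (2 k + 1) (X - 1) ^ k * U` modulo `(X - 1) ^ (k + 1)`.
Since the diagonal entries `2 k + 1` never vanish, the coefficients of `P` in this basis can be
solved for one at a time (existence), and a nonzero `P = (X - 1) ^ k * U` with `U (1) ≠ 0`
has `D P` divisible by `(X - 1) ^ k` but not by `(X - 1) ^ (k + 1)` (uniqueness).
-/

open Polynomial

lemma Dop_add (P Q : ℝ[X]) : Dop (P + Q) = Dop P + Dop Q := by
  simp only [Dop, derivative_add]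
  ring

lemma Dop_sub (P Q : ℝ[X]) : Dop (P - Q) = Dop P - Dop Q := by
  simp only [Dop, derivative_sub]
  ring

/-- The quotient is read off the identity
`D ((X - 1) ^ k * U) = (X - 1) ^ k * ((2 k + 1) U + (X - 1) ((k + 1) U + (X + 1) U'))`. -/
lemma X_sub_one_pow_succ_dvd_Dop_sub (k : ℕ) (U : ℝ[X]) :
    (X - 1) ^ (k + 1) ∣ Dop ((X - 1) ^ k * U) - C (2 * k + 1 : ℝ) * ((X - 1) ^ k * U) := by
  refine ⟨C (k + 1 : ℝ) * U + (X + 1) * derivative U, ?_⟩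
  rcases k with _ | k
  · simp only [Dop, pow_zero, pow_one, one_mul, CharP.cast_eq_zero, mul_zero, zero_add, map_one]
    ring
  · simp only [Dop, derivative_mul, derivative_pow, derivative_sub, derivative_X, derivative_one,
      map_add, map_mul, map_natCast, map_ofNat, map_one]
    push_cast
    ring

lemma X_sub_one_pow_succ_dvd_Dop_iff (k : ℕ) (U : ℝ[X]) :
    (X - 1) ^ (k + 1) ∣ Dop ((X - 1) ^ k * U) ↔ X - 1 ∣ U := by
  have hX : (X - 1 : ℝ[X]) ^ k ≠ 0 := pow_ne_zero _ (by simpa using X_sub_C_ne_zero (1 : ℝ))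
  have hc : IsUnit (C (2 * k + 1 : ℝ)) := isUnit_C.2 (Ne.isUnit (by positivity))
  rw [dvd_iff_dvd_of_dvd_sub (X_sub_one_pow_succ_dvd_Dop_sub k U), mul_left_comm, pow_succ,
    mul_dvd_mul_iff_left hX, hc.dvd_mul_left]

lemma eq_zero_of_X_sub_one_pow_dvd_Dop {P : ℝ[X]} {N : ℕ} (hdeg : P.degree ≤ N)
    (hdvd : (X - 1) ^ (N + 1) ∣ Dop P) : P = 0 := by
  by_contra hP
  obtain ⟨U, hPU, hU⟩ := exists_eq_pow_rootMultiplicity_mul_and_not_dvd P hP 1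
  rw [C_1] at hPU hU
  set k := P.rootMultiplicity 1
  have hk : k ≤ N := by
    have := natDegree_le_of_dvd (Dvd.intro U hPU.symm) hP
    rw [natDegree_pow, ← C_1, natDegree_X_sub_C, mul_one] at this
    exact this.trans (natDegree_le_iff_degree_le.2 hdeg)
  have hdvd' : (X - 1) ^ (k + 1) ∣ Dop ((X - 1) ^ k * U) :=
    hPU ▸ (pow_dvd_pow _ (by omega)).trans hdvd
  exact hU ((X_sub_one_pow_succ_dvd_Dop_iff k U).1 hdvd')

lemma exists_X_sub_one_pow_succ_dvd_sub_Dop_add {Q P₀ : ℝ[X]} {k : ℕ}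
    (h : (X - 1) ^ k ∣ Q - Dop P₀) :
    ∃ a : ℝ, (X - 1) ^ (k + 1) ∣ Q - Dop (P₀ + (X - 1) ^ k * C a) := by
  obtain ⟨R, hR⟩ := h
  have hc : (2 * k + 1 : ℝ) ≠ 0 := by positivity
  refine ⟨R.eval 1 / (2 * k + 1), ?_⟩
  set T := (X - 1) ^ k * C (R.eval 1 / (2 * k + 1))
  have hcT : C (2 * k + 1 : ℝ) * T = (X - 1) ^ k * C (R.eval 1) := by
    rw [mul_left_comm, ← C_mul, mul_div_cancel₀ _ hc]
  have hsplit : Q - Dop (P₀ + T) =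
      (X - 1) ^ k * (R - C (R.eval 1)) - (Dop T - C (2 * k + 1 : ℝ) * T) := by
    rw [Dop_add, hcT]
    linear_combination hR
  rw [hsplit, pow_succ]
  exact dvd_sub (mul_dvd_mul_left _ (by simpa using X_sub_C_dvd_sub_C_eval (a := (1 : ℝ))))
    (X_sub_one_pow_succ_dvd_Dop_sub k _)

lemma exists_degree_le_X_sub_one_pow_dvd_sub_Dop (Q : ℝ[X]) (N : ℕ) :
    ∃ P : ℝ[X], P.degree ≤ N ∧ (X - 1) ^ (N + 1) ∣ Q - Dop P := by
  induction N with
  | zero =>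
    obtain ⟨a, ha⟩ := exists_X_sub_one_pow_succ_dvd_sub_Dop_add (k := 0) (one_dvd (Q - Dop 0))
    exact ⟨0 + (X - 1) ^ 0 * C a, by compute_degree!, ha⟩
  | succ N ih =>
    obtain ⟨P₀, hdeg₀, hdvd₀⟩ := ih
    obtain ⟨a, ha⟩ := exists_X_sub_one_pow_succ_dvd_sub_Dop_add hdvd₀
    refine ⟨P₀ + (X - 1) ^ (N + 1) * C a, ?_, ha⟩
    exact (degree_add_le _ _).trans
      (max_le (hdeg₀.trans (by exact_mod_cast N.le_succ)) (by compute_degree!))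

/-- For every polynomial `Q` and every `N`, there is a unique polynomial `P` of
degree at most `N` such that `D(P)` agrees with `Q` up to order `(X−1)^{N+1}`. -/
theorem Dop_approximate_inverse (Q : Polynomial ℝ) (N : ℕ) :
    ∃! P : Polynomial ℝ, P.degree ≤ (N : ℕ) ∧ (X - 1) ^ (N + 1) ∣ (Q - Dop P) := by
  obtain ⟨P, hdeg, hdvd⟩ := exists_degree_le_X_sub_one_pow_dvd_sub_Dop Q N
  refine ⟨P, ⟨hdeg, hdvd⟩, ?_⟩
  rintro P' ⟨hdeg', hdvd'⟩
  refine sub_eq_zero.1 ?_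
  refine eq_zero_of_X_sub_one_pow_dvd_Dop ((degree_sub_le _ _).trans (max_le hdeg' hdeg)) ?_
  rw [Dop_sub, ← sub_sub_sub_cancel_left (Dop P) (Dop P') Q]
  exact dvd_sub hdvd hdvd'
end

section
/- Let κ ≠ 0 be a real number and define, for θ ∈ [0,π], g_κ(θ) = θ/κ − (π/κ) · (∫_0^θ e^{−κ cos φ} dφ) / (∫_0^π e^{−κ cos φ} dφ). Then g_κ(0) = 0, g_κ(π) = 0, and for every θ ∈ (0,π) the function θ ↦ e^{κ cos θ} g_κ'(θ) is differentiable with d/dθ ( e^{κ cos θ} g_κ'(θ) ) = − sin θ · e^{κ cos θ}. (This is the explicit solution of the generalized-collisional-invariant elliptic problem in dimension 2.) -/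
open Real intervalIntegral

/-- The explicit generalized collisional invariant in dimension 2:
`g_κ(θ) = θ/κ − (π/κ)·(∫_0^θ e^{−κcos φ} dφ)/(∫_0^π e^{−κcos φ} dφ)`. -/
noncomputable def gci2D (κ : ℝ) (θ : ℝ) : ℝ :=
  θ / κ - (π / κ) *
    (∫ φ in (0:ℝ)..θ, Real.exp (-(κ * Real.cos φ))) /
    (∫ φ in (0:ℝ)..π, Real.exp (-(κ * Real.cos φ)))

/-! The primitive of `e^{−κ cos}` in `g_κ` is normalized so that `g_κ(π) = 0`, and its
derivative `e^{−κ cos}` is cancelled by the weight `e^{κ cos}`: the flux `e^{κ cos θ} g_κ'(θ)`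
is `e^{κ cos θ}/κ` up to a constant, whose derivative is `−sin θ · e^{κ cos θ}`. -/

lemma integral_exp_neg_mul_cos_pos (κ : ℝ) :
    0 < ∫ φ in (0:ℝ)..π, Real.exp (-(κ * Real.cos φ)) :=
  intervalIntegral_pos_of_pos
    ((by fun_prop : Continuous fun φ => Real.exp (-(κ * Real.cos φ))).intervalIntegrable 0 π)
    (fun _ => Real.exp_pos _) Real.pi_pos

lemma gci2D_zero (κ : ℝ) : gci2D κ 0 = 0 := by
  simp [gci2D]

lemma gci2D_pi (κ : ℝ) : gci2D κ π = 0 := by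
  rw [gci2D, mul_div_assoc, div_self (integral_exp_neg_mul_cos_pos κ).ne', mul_one, sub_self]

lemma hasDerivAt_gci2D (κ θ : ℝ) :
    HasDerivAt (gci2D κ)
      (1 / κ - (π / κ) * Real.exp (-(κ * Real.cos θ)) /
        ∫ φ in (0:ℝ)..π, Real.exp (-(κ * Real.cos φ))) θ := by
  have hcont : Continuous fun φ => Real.exp (-(κ * Real.cos φ)) := by fun_prop
  have hprimitive : HasDerivAt (fun u => ∫ φ in (0:ℝ)..u, Real.exp (-(κ * Real.cos φ)))
      (Real.exp (-(κ * Real.cos θ))) θ :=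
    integral_hasDerivAt_right (hcont.intervalIntegrable 0 θ)
      (hcont.stronglyMeasurableAtFilter _ _) hcont.continuousAt
  exact ((hasDerivAt_id θ).div_const κ).sub ((hprimitive.const_mul (π / κ)).div_const _)

lemma exp_mul_deriv_gci2D (κ : ℝ) :
    (fun t => Real.exp (κ * Real.cos t) * deriv (gci2D κ) t) =
      fun t => Real.exp (κ * Real.cos t) / κ -
        π / (κ * ∫ φ in (0:ℝ)..π, Real.exp (-(κ * Real.cos φ))) := by
  funext t
  have hcancel : Real.exp (κ * Real.cos t) * Real.exp (-(κ * Real.cos t)) = 1 := by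
    rw [← Real.exp_add, add_neg_cancel, Real.exp_zero]
  rw [(hasDerivAt_gci2D κ t).deriv]
  linear_combination (-(π / κ) / ∫ φ in (0:ℝ)..π, Real.exp (-(κ * Real.cos φ))) * hcancel

/-- `g_κ` vanishes at `0` and `π` and solves
`(e^{κ cos θ} g_κ'(θ))' = −sin θ · e^{κ cos θ}` on `(0,π)`. -/
theorem gci2D_solves_elliptic_problem (κ : ℝ) (hκ : κ ≠ 0) :
    gci2D κ 0 = 0 ∧ gci2D κ π = 0 ∧
    ∀ θ ∈ Set.Ioo 0 π,
      HasDerivAt (fun t => Real.exp (κ * Real.cos t) * deriv (gci2D κ) t)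
        (-(Real.sin θ * Real.exp (κ * Real.cos θ))) θ := by
  refine ⟨gci2D_zero κ, gci2D_pi κ, fun θ _ => ?_⟩
  rw [exp_mul_deriv_gci2D]
  have hweight : HasDerivAt (fun t => Real.exp (κ * Real.cos t))
      (Real.exp (κ * Real.cos θ) * (κ * -Real.sin θ)) θ :=
    ((Real.hasDerivAt_cos θ).const_mul κ).exp
  refine ((hweight.div_const κ).sub_const _).congr_deriv ?_
  field_simp
end

section
/- Let κ > 0 be a real number and define, for θ ∈ [0,π], g_κ(θ) = θ/κ − (π/κ) · (∫_0^θ e^{−κ cos φ} dφ) / (∫_0^π e^{−κ cos φ} dφ). Then g_κ(θ) > 0 for every θ ∈ (0,π). -/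
/-!
The integrand `φ ↦ e^{−κ cos φ}` is strictly increasing on `[0, π]`, so its primitive
`F θ = ∫_0^θ e^{−κ cos φ} dφ` is strictly convex there. A strictly convex function with
`F 0 = 0` lies strictly below its chord, `F θ / θ < F π / π` for `0 < θ < π`, which is exactly
`π F θ < θ F π`, i.e. `g_κ θ > 0`.
-/

open Real intervalIntegral

open Set

theorem StrictMonoOn.strictConvexOn_primitive {f : ℝ → ℝ} {a b : ℝ}
    (hf : ContinuousOn f (Icc a b)) (hmono : StrictMonoOn f (Icc a b)) :
    StrictConvexOn ℝ (Icc a b) fun t => ∫ x in a..t, f x := by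
  rcases lt_or_ge b a with hba | hab
  · rw [Icc_eq_empty_of_lt hba]
    exact ⟨convex_empty, by simp⟩
  have hderiv : ∀ t ∈ Ioo a b, deriv (fun t => ∫ x in a..t, f x) t = f t := fun t ht =>
    have hsub : uIcc a t ⊆ Icc a b :=
      uIcc_subset_Icc (left_mem_Icc.2 hab) (Ioo_subset_Icc_self ht)
    (integral_hasDerivAt_right (hf.mono hsub).intervalIntegrable
      ((hf.mono Ioo_subset_Icc_self).stronglyMeasurableAtFilter isOpen_Ioo t ht)
      (hf.continuousAt (Icc_mem_nhds ht.1 ht.2))).deriv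
  refine StrictMonoOn.strictConvexOn_of_deriv (convex_Icc a b) ?_ ?_
  · rw [← uIcc_of_le hab] at hf ⊢
    exact continuousOn_primitive_interval (hf.integrableOn_compact isCompact_uIcc)
  · rw [interior_Icc]
    intro x hx y hy hxy
    rw [hderiv x hx, hderiv y hy]
    exact hmono (Ioo_subset_Icc_self hx) (Ioo_subset_Icc_self hy) hxy

theorem StrictMonoOn.integral_div_sub_lt {f : ℝ → ℝ} {a b θ : ℝ}
    (hf : ContinuousOn f (Icc a b)) (hmono : StrictMonoOn f (Icc a b)) (hθ : θ ∈ Ioo a b) :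
    (∫ x in a..θ, f x) / (θ - a) < (∫ x in a..b, f x) / (b - a) := by
  have hab : a ≤ b := (hθ.1.trans hθ.2).le
  simpa using (hmono.strictConvexOn_primitive hf).secant_strict_mono_aux2
    (left_mem_Icc.2 hab) (right_mem_Icc.2 hab) hθ.1 hθ.2

theorem strictMonoOn_exp_neg_mul_cos {κ : ℝ} (hκ : 0 < κ) :
    StrictMonoOn (fun φ => exp (-(κ * cos φ))) (Icc 0 π) := fun _ hx _ hy hxy =>
  exp_lt_exp.2 <| neg_lt_neg <| mul_lt_mul_of_pos_left (strictAntiOn_cos hx hy hxy) hκ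

/-- For `κ > 0`, the generalized collisional invariant `g_κ` is positive
on `(0,π)`. -/
theorem gci2D_pos (κ : ℝ) (hκ : 0 < κ) :
    ∀ θ ∈ Set.Ioo 0 π, 0 < gci2D κ θ := by
  intro θ hθ
  have hcont : Continuous fun φ => exp (-(κ * cos φ)) := by fun_prop
  have hslope := (strictMonoOn_exp_neg_mul_cos hκ).integral_div_sub_lt hcont.continuousOn hθ
  have htotal : 0 < ∫ φ in (0:ℝ)..π, exp (-(κ * cos φ)) :=
    intervalIntegral_pos_of_pos (hcont.intervalIntegrable 0 π) (fun _ => exp_pos _) pi_pos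
  rw [sub_zero, sub_zero, div_lt_div_iff₀ hθ.1 pi_pos] at hslope
  rw [gci2D, sub_pos, mul_div_assoc, div_mul_eq_mul_div, div_lt_div_iff_of_pos_right hκ,
    mul_div_assoc', div_lt_iff₀ htotal]
  linarith
end

section
/- (Euler's formula for arctangent as an asymptotic expansion.) For every natural number N, as t → 0 one has arctan t − ( t/(1+t²) ) · Σ_{k=0}^{N} ( 2^{2k} (k!)² / (2k+1)! ) · ( t² / (1+t²) )^{k} = O(t^{2N+1}). -/
/-!
Write `u_k(t) = t^(2k+1) / (1+t²)^(k+1)`, so that the sum in the theorem is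
`S_N = ∑_{k ≤ N} c_k u_k` with `c_k = 2^(2k) (k!)² / (2k+1)!`. Since `c_{k+1} (2k+3) = c_k (2k+2)`,
the derivatives of the `c_k u_k` telescope and `S_N' = 1/(1+t²) - (2N+2) c_N t^(2N+2) / (1+t²)^(N+2)`.
Hence `(arctan - S_N)' = O(t^(2N+2))` globally, and as `arctan 0 = S_N 0 = 0` the mean value
inequality gives `arctan t - S_N t = O(t^(2N+3))`.
-/

open Real Filter Asymptotics

section MeanValue

variable {𝕜 G : Type*} [RCLike 𝕜] [NormedAddCommGroup G] [NormedSpace 𝕜 G]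

theorem norm_sub_apply_zero_le_of_norm_deriv_le_pow {f f' : 𝕜 → G} {C : ℝ} {n : ℕ}
    (hf : ∀ x, HasDerivAt f (f' x) x) (hf' : ∀ x, ‖f' x‖ ≤ C * ‖x‖ ^ n) (t : 𝕜) :
    ‖f t - f 0‖ ≤ C * ‖t‖ ^ (n + 1) := by
  have hC : 0 ≤ C := by simpa using (norm_nonneg _).trans (hf' 1)
  have hball : ∀ x ∈ Metric.closedBall (0 : 𝕜) ‖t‖, ‖f' x‖ ≤ C * ‖t‖ ^ n := fun x hx =>
    (hf' x).trans <| by gcongr; simpa using hx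
  calc ‖f t - f 0‖ ≤ C * ‖t‖ ^ n * ‖t - 0‖ :=
        (convex_closedBall 0 ‖t‖).norm_image_sub_le_of_norm_hasDerivWithin_le
          (fun x _ => (hf x).hasDerivWithinAt) hball
          (Metric.mem_closedBall_self (norm_nonneg t)) (by simp)
    _ = C * ‖t‖ ^ (n + 1) := by rw [sub_zero, pow_succ, mul_assoc]

theorem isBigO_pow_succ_of_norm_deriv_le_pow {f f' : 𝕜 → G} {C : ℝ} {n : ℕ} (h0 : f 0 = 0)
    (hf : ∀ x, HasDerivAt f (f' x) x) (hf' : ∀ x, ‖f' x‖ ≤ C * ‖x‖ ^ n) :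
    f =O[⊤] fun t => t ^ (n + 1) :=
  .of_bound C <| Eventually.of_forall fun t => by
    simpa [h0] using norm_sub_apply_zero_le_of_norm_deriv_le_pow hf hf' t

end MeanValue

noncomputable def eulerCoeff (k : ℕ) : ℝ :=
  2 ^ (2 * k) * (k.factorial : ℝ) ^ 2 / ((2 * k + 1).factorial : ℝ)

theorem eulerCoeff_nonneg (k : ℕ) : 0 ≤ eulerCoeff k := by
  unfold eulerCoeff; positivity

theorem eulerCoeff_succ (k : ℕ) :
    eulerCoeff (k + 1) = eulerCoeff k * (2 * k + 2) / (2 * k + 3) := by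
  unfold eulerCoeff
  rw [show 2 * (k + 1) + 1 = 2 * k + 1 + 1 + 1 by ring, Nat.factorial_succ, Nat.factorial_succ,
    Nat.factorial_succ]
  push_cast
  field_simp
  ring

theorem hasDerivAt_pow_div_one_add_sq_pow (m : ℕ) (t : ℝ) :
    HasDerivAt (fun t : ℝ => t ^ (2 * m + 1) / (1 + t ^ 2) ^ (m + 1))
      (((2 * m + 1) * t ^ (2 * m) - t ^ (2 * m + 2)) / (1 + t ^ 2) ^ (m + 2)) t := by
  have hnum := hasDerivAt_pow (2 * m + 1) t
  have hden := ((hasDerivAt_pow 2 t).const_add 1).fun_pow (m + 1)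
  refine (hnum.div hden (by positivity)).congr_deriv ?_
  push_cast
  field_simp
  ring

noncomputable def eulerPartialSum (N : ℕ) (t : ℝ) : ℝ :=
  ∑ k ∈ Finset.range (N + 1), eulerCoeff k * (t ^ (2 * k + 1) / (1 + t ^ 2) ^ (k + 1))

theorem eulerPartialSum_eq (N : ℕ) (t : ℝ) :
    t / (1 + t ^ 2) * ∑ k ∈ Finset.range (N + 1), eulerCoeff k * (t ^ 2 / (1 + t ^ 2)) ^ k =
      eulerPartialSum N t := by
  rw [eulerPartialSum, Finset.mul_sum]
  refine Finset.sum_congr rfl fun k _ => ?_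
  rw [div_pow, ← pow_mul]
  field_simp
  ring

theorem hasDerivAt_eulerPartialSum (N : ℕ) (t : ℝ) :
    HasDerivAt (eulerPartialSum N)
      (1 / (1 + t ^ 2) - (2 * N + 2) * eulerCoeff N * t ^ (2 * N + 2) / (1 + t ^ 2) ^ (N + 2))
      t := by
  induction N with
  | zero =>
    have h := (hasDerivAt_pow_div_one_add_sq_pow 0 t).const_mul (eulerCoeff 0)
    rw [show eulerPartialSum 0 = _ from funext fun s => Finset.sum_range_one _]
    refine h.congr_deriv ?_
    simp only [eulerCoeff]
    field_simp
    ring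
  | succ n ih =>
    have h := ih.add ((hasDerivAt_pow_div_one_add_sq_pow (n + 1) t).const_mul (eulerCoeff (n + 1)))
    rw [show eulerPartialSum (n + 1) = _ from funext fun s => Finset.sum_range_succ _ (n + 1)]
    refine h.congr_deriv ?_
    rw [eulerCoeff_succ]
    push_cast
    field_simp
    ring

theorem norm_eulerRemainderDeriv_le (N : ℕ) (x : ℝ) :
    ‖(2 * N + 2) * eulerCoeff N * x ^ (2 * N + 2) / (1 + x ^ 2) ^ (N + 2)‖ ≤
      (2 * N + 2) * eulerCoeff N * ‖x‖ ^ (2 * N + 2) := by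
  have hden : 1 ≤ (1 + x ^ 2) ^ (N + 2) := one_le_pow₀ (by nlinarith)
  have hc : 0 ≤ (2 * N + 2) * eulerCoeff N := mul_nonneg (by positivity) (eulerCoeff_nonneg N)
  rw [norm_div, norm_mul, norm_pow, Real.norm_of_nonneg hc,
    Real.norm_of_nonneg (by positivity : (0 : ℝ) ≤ (1 + x ^ 2) ^ (N + 2))]
  exact div_le_self (mul_nonneg hc (by positivity)) hden

/-- **Euler's formula for arctangent** as an asymptotic expansion: for every `N`,
`arctan t = (t/(1+t²)) Σ_{k=0}^{N} (2^{2k}(k!)²/(2k+1)!) (t²/(1+t²))^k + O(t^{2N+1})`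
as `t → 0`. -/
theorem arctan_euler_expansion (N : ℕ) :
    (fun t : ℝ => Real.arctan t -
        (t / (1 + t ^ 2)) * ∑ k ∈ Finset.range (N + 1),
          ((2 : ℝ) ^ (2 * k) * ((k.factorial : ℝ)) ^ 2 / ((2 * k + 1).factorial : ℝ)) *
            (t ^ 2 / (1 + t ^ 2)) ^ k)
      =O[nhds 0] fun t : ℝ => t ^ (2 * N + 1) := by
  have hderiv (x : ℝ) : HasDerivAt (fun t => arctan t - eulerPartialSum N t)
      ((2 * N + 2) * eulerCoeff N * x ^ (2 * N + 2) / (1 + x ^ 2) ^ (N + 2)) x :=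
    ((hasDerivAt_arctan x).sub (hasDerivAt_eulerPartialSum N x)).congr_deriv (by ring)
  have hremainder : (fun t => arctan t - eulerPartialSum N t) =O[⊤] fun t => t ^ (2 * N + 3) :=
    isBigO_pow_succ_of_norm_deriv_le_pow (by simp [eulerPartialSum]) hderiv
      (norm_eulerRemainderDeriv_le N)
  refine .trans ?_ (isLittleO_pow_pow (by omega : 2 * N + 1 < 2 * N + 3)).isBigO
  refine (hremainder.mono le_top).congr_left fun t => ?_
  rw [← eulerPartialSum_eq]
  rfl
end
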